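/- arXiv:2403.01189 — 4 statements merged into one kernel-verified Lean document; each statement's English description precedes it below -/
import Mathlib

section
/- Theorem 1 (TIW-DSM equals score matching up to a constant). For every pair of measurable time-dependent vector fields s₁, s₂ : ℝ^d × (0,T] → ℝ^d for which all integrals below are finite, (1/2)∫₀ᵀ λ(t) ∫ r_t(x) ‖s₁(x,t) − ∇ log r_t(x)‖² dx dt − (1/2)∫₀ᵀ λ(t) ∫ r_t(x) ‖s₂(x,t) − ∇ log r_t(x)‖² dx dt = (1/2)∫₀ᵀ λ(t) ∫∫ p_bias(x₀) k_t(x,x₀) w_t(x) ‖s₁(x,t) − ∇ log k_t(x,x₀) − ∇ log w_t(x)‖² dx dx₀ dt − (1/2)∫₀ᵀ λ(t) ∫∫ p_bias(x₀) k_t(x,x₀) w_t(x) ‖s₂(x,t) − ∇ log k_t(x,x₀) − ∇ log w_t(x)‖² dx dx₀ dt. In other words, the time-dependent importance-reweighted denoising score-matching objective L_TIW-DSM(s; p_bias, w_t) and the score-matching objective L_SM(s; p_data) differ by a constant that does not depend on the vector field s. -/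
/-!
For fixed `t` and `x`, both objectives have the same difference of integrands at `s₁` and `s₂`,
namely `q w (‖s₁ - ∇log w‖² - ‖s₂ - ∇log w‖²) - 2 w ⟪s₁ - s₂, ∇q⟫`. For score matching this is
`r = q w` together with `∇log r = ∇log w + ∇q / q`. For the denoising objective, expanding the
square with `∇log k = ∇k / k` shows that `x₀` enters only through `p_bias k` and `p_bias ∇k`,
whose `x₀`-integrals are `q` and `∇q`. The integrability of `p_bias ∇k` needed for this comes from
the finiteness of the denoising objective: `∇log k` is square integrable for the finite measure
`p_bias k dx₀`, hence integrable. Fubini and integration in `t` finish the argument.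
-/

open MeasureTheory

section Gradient

variable {F : Type*} [NormedAddCommGroup F] [InnerProductSpace ℝ F] [CompleteSpace F]
  {f g : F → ℝ} {f' g' x : F}

theorem HasGradientAt.log (hf : HasGradientAt f f' x) (hx : f x ≠ 0) :
    HasGradientAt (fun y => Real.log (f y)) ((f x)⁻¹ • f') x := by
  rw [hasGradientAt_iff_hasFDerivAt, map_smul]
  exact hf.hasFDerivAt.log hx

theorem HasGradientAt.sub (hf : HasGradientAt f f' x) (hg : HasGradientAt g g' x) :
    HasGradientAt (fun y => f y - g y) (f' - g') x := by
  rw [hasGradientAt_iff_hasFDerivAt, map_sub]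
  exact hf.hasFDerivAt.sub hg.hasFDerivAt

theorem gradient_log (hf : DifferentiableAt ℝ f x) (hx : f x ≠ 0) :
    gradient (fun y => Real.log (f y)) x = (f x)⁻¹ • gradient f x :=
  (hf.hasGradientAt.log hx).gradient

end Gradient

theorem norm_sub_sq_sub_norm_sub_sq {F : Type*} [NormedAddCommGroup F] [InnerProductSpace ℝ F]
    (a b v : F) :
    ‖a - v‖ ^ 2 - ‖b - v‖ ^ 2 = ‖a‖ ^ 2 - ‖b‖ ^ 2 - 2 * inner ℝ (a - b) v := by
  rw [norm_sub_sq_real, norm_sub_sq_real, inner_sub_left]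
  ring

section Measurability

variable {α : Type*} [MeasurableSpace α]

theorem measurable_fderiv_apply_of_measurable {E : Type*} [NormedAddCommGroup E]
    [NormedSpace ℝ E] {f : E → α → ℝ} (hf : ∀ y, Measurable (f y)) {x : E}
    (hdiff : ∀ a, DifferentiableAt ℝ (fun y => f y a) x) (v : E) :
    Measurable fun a => fderiv ℝ (fun y => f y a) x v := by
  refine measurable_of_tendsto_metrizable
    (f := fun (n : ℕ) a => (n : ℝ) * (f (x + (n : ℝ)⁻¹ • v) a - f x a))
    (fun n => ((hf _).sub (hf x)).const_mul _) (tendsto_pi_nhds.2 fun a => ?_)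
  exact (hdiff a).hasFDerivAt.lim v
    (tendsto_norm_atTop_atTop.comp tendsto_natCast_atTop_atTop)

theorem stronglyMeasurable_gradient_apply_of_measurable {E : Type*} [NormedAddCommGroup E]
    [InnerProductSpace ℝ E] [FiniteDimensional ℝ E] {f : E → α → ℝ}
    (hf : ∀ y, Measurable (f y)) {x : E} (hdiff : ∀ a, DifferentiableAt ℝ (fun y => f y a) x) :
    StronglyMeasurable fun a => gradient (fun y => f y a) x := by
  let b := stdOrthonormalBasis ℝ E
  have hsum : (fun a => gradient (fun y => f y a) x)
      = fun a => ∑ i, fderiv ℝ (fun y => f y a) x (b i) • b i := by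
    funext a
    conv_lhs => rw [← b.sum_repr' (gradient (fun y => f y a) x)]
    simp only [real_inner_comm, inner_gradient_left]
  rw [hsum]
  refine Finset.stronglyMeasurable_fun_sum _ fun i _ => ?_
  exact ((measurable_fderiv_apply_of_measurable hf hdiff (b i)).stronglyMeasurable).smul_const _

end Measurability

section Denoising

variable {α E : Type*} [MeasurableSpace α] {ν : Measure α} {β κ : α → ℝ} {W : ℝ}

theorem integrable_smul_of_mul_norm_sub_inv_smul_sq [NormedAddCommGroup E] [NormedSpace ℝ E]
    {G : α → E} {s u : E} (hβ : ∀ a, 0 ≤ β a) (hκ : ∀ a, 0 < κ a)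
    (hW : 0 < W) (hβm : AEStronglyMeasurable β ν) (hGm : AEStronglyMeasurable G ν)
    (hβκ : Integrable (fun a => β a * κ a) ν)
    (hsq : Integrable (fun a => β a * κ a * W * ‖s - (κ a)⁻¹ • G a - u‖ ^ 2) ν) :
    Integrable (fun a => β a • G a) ν := by
  refine ((hβκ.const_mul (1 + ‖s - u‖)).add (hsq.const_mul W⁻¹)).mono' (hβm.smul hGm)
    (.of_forall fun a => ?_)
  have hβκ0 : 0 ≤ β a * κ a := mul_nonneg (hβ a) (hκ a).le
  set e := ‖s - (κ a)⁻¹ • G a - u‖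
  have hscore : ‖(κ a)⁻¹ • G a‖ ≤ 1 + ‖s - u‖ + e ^ 2 := by
    have htri : ‖(κ a)⁻¹ • G a‖ ≤ ‖s - u‖ + e := by
      simpa [e, sub_right_comm s] using norm_sub_le (s - u) (s - u - (κ a)⁻¹ • G a)
    nlinarith [sq_nonneg (e - 1)]
  calc ‖β a • G a‖ = β a * κ a * ‖(κ a)⁻¹ • G a‖ := by
        rw [norm_smul, norm_smul, norm_inv, Real.norm_of_nonneg (hβ a),
          Real.norm_of_nonneg (hκ a).le, mul_assoc, mul_inv_cancel_left₀ (hκ a).ne']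
    _ ≤ β a * κ a * (1 + ‖s - u‖ + e ^ 2) := mul_le_mul_of_nonneg_left hscore hβκ0
    _ = (1 + ‖s - u‖) * (β a * κ a) + W⁻¹ * (β a * κ a * W * e ^ 2) := by
        field_simp

theorem integral_denoising_sub_eq [NormedAddCommGroup E] [InnerProductSpace ℝ E]
    [CompleteSpace E] {G : α → E} {s₁ s₂ u : E} (hκ : ∀ a, κ a ≠ 0)
    (hβκ : Integrable (fun a => β a * κ a) ν)
    (hβG : Integrable (fun a => β a • G a) ν) :
    ∫ a, (β a * κ a * W * ‖s₁ - (κ a)⁻¹ • G a - u‖ ^ 2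
        - β a * κ a * W * ‖s₂ - (κ a)⁻¹ • G a - u‖ ^ 2) ∂ν
      = (∫ a, β a * κ a ∂ν) * W * (‖s₁ - u‖ ^ 2 - ‖s₂ - u‖ ^ 2)
        - 2 * W * inner ℝ (s₁ - s₂) (∫ a, β a • G a ∂ν) := by
  have hpt : ∀ a, β a * κ a * W * ‖s₁ - (κ a)⁻¹ • G a - u‖ ^ 2
        - β a * κ a * W * ‖s₂ - (κ a)⁻¹ • G a - u‖ ^ 2
      = β a * κ a * (W * (‖s₁ - u‖ ^ 2 - ‖s₂ - u‖ ^ 2))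
        - 2 * W * inner ℝ (s₁ - s₂) (β a • G a) := by
    intro a
    rw [sub_right_comm s₁, sub_right_comm s₂, ← mul_sub, norm_sub_sq_sub_norm_sub_sq,
      sub_sub_sub_cancel_right, real_inner_smul_right, real_inner_smul_right]
    field_simp [hκ a]
  simp_rw [hpt]
  rw [integral_sub (hβκ.mul_const _) ((hβG.const_inner _).const_mul _), integral_mul_const,
    integral_const_mul, integral_inner hβG]
  ring

end Denoising

theorem score_matching_sub_eq {E : Type*} [NormedAddCommGroup E] [InnerProductSpace ℝ E]
    [CompleteSpace E] {q r w : E → ℝ} {x : E} (s₁ s₂ : E) (hq : DifferentiableAt ℝ q x)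
    (hr : DifferentiableAt ℝ r x) (hq_pos : ∀ y, 0 < q y) (hr_pos : ∀ y, 0 < r y)
    (hw : ∀ y, w y = r y / q y) :
    r x * ‖s₁ - gradient (fun y => Real.log (r y)) x‖ ^ 2
        - r x * ‖s₂ - gradient (fun y => Real.log (r y)) x‖ ^ 2
      = q x * w x * (‖s₁ - gradient (fun y => Real.log (w y)) x‖ ^ 2
          - ‖s₂ - gradient (fun y => Real.log (w y)) x‖ ^ 2)
        - 2 * w x * inner ℝ (s₁ - s₂) (gradient q x) := by
  have hlogq := hq.hasGradientAt.log (hq_pos x).ne'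
  have hlogr := hr.hasGradientAt.log (hr_pos x).ne'
  have hlogw : gradient (fun y => Real.log (w y)) x
      = (r x)⁻¹ • gradient r x - (q x)⁻¹ • gradient q x := by
    have hsplit : (fun y => Real.log (w y)) = fun y => Real.log (r y) - Real.log (q y) :=
      funext fun y => by rw [hw, Real.log_div (hr_pos y).ne' (hq_pos y).ne']
    rw [hsplit]
    exact (hlogr.sub hlogq).gradient
  have hscore : gradient (fun y => Real.log (r y)) x
      = gradient (fun y => Real.log (w y)) x + (q x)⁻¹ • gradient q x := by
    rw [hlogr.gradient, hlogw, sub_add_cancel]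
  rw [hscore, sub_add_eq_sub_sub, sub_add_eq_sub_sub, ← mul_sub, norm_sub_sq_sub_norm_sub_sq,
    sub_sub_sub_cancel_right, real_inner_smul_right, hw]
  field_simp [(hq_pos x).ne']

section Fubini

variable {α β : Type*} [MeasurableSpace α] [MeasurableSpace β] {μ : Measure β} {ν : Measure α}
  [SFinite μ] [SFinite ν]

theorem integral_integral_swap_sub_eq {F₁ F₂ : β × α → ℝ} {g₁ g₂ : β → ℝ}
    (hF₁ : Integrable F₁ (μ.prod ν)) (hF₂ : Integrable F₂ (μ.prod ν))
    (hg₁ : Integrable g₁ μ) (hg₂ : Integrable g₂ μ)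
    (h : ∀ᵐ x ∂μ, ∫ y, (F₁ (x, y) - F₂ (x, y)) ∂ν = g₁ x - g₂ x) :
    ∫ y, ∫ x, F₁ (x, y) ∂μ ∂ν - ∫ y, ∫ x, F₂ (x, y) ∂μ ∂ν = ∫ x, g₁ x ∂μ - ∫ x, g₂ x ∂μ := by
  rw [← integral_integral_swap (f := fun x y => F₁ (x, y)) hF₁,
    ← integral_integral_swap (f := fun x y => F₂ (x, y)) hF₂,
    ← integral_sub hF₁.integral_prod_left hF₂.integral_prod_left, ← integral_sub hg₁ hg₂]
  refine integral_congr_ae ?_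
  filter_upwards [h, hF₁.prod_right_ae, hF₂.prod_right_ae] with x hx h₁ h₂
  rw [← integral_sub h₁ h₂, hx]

end Fubini

section DensityRatio

variable {E α : Type*} [NormedAddCommGroup E] [InnerProductSpace ℝ E] [FiniteDimensional ℝ E]
  [MeasurableSpace α] {ν : Measure α} {pbias : α → ℝ} {k : E → α → ℝ} {q r w : E → ℝ}

theorem integral_dsm_sub_eq_sm_sub (x : E) (s₁ s₂ : E) (hpbias_meas : Measurable pbias)
    (hpbias_nonneg : ∀ x₀, 0 ≤ pbias x₀) (hk_meas : ∀ y, Measurable (k y))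
    (hk_pos : ∀ x₀, 0 < k x x₀) (hk_diff : ∀ x₀, DifferentiableAt ℝ (fun y => k y x₀) x)
    (hq_def : q x = ∫ x₀, pbias x₀ * k x x₀ ∂ν) (hq_pos : ∀ y, 0 < q y)
    (hq_diff : DifferentiableAt ℝ q x)
    (hq_grad : gradient q x = ∫ x₀, pbias x₀ • gradient (fun y => k y x₀) x ∂ν)
    (hr_pos : ∀ y, 0 < r y) (hr_diff : DifferentiableAt ℝ r x) (hw : ∀ y, w y = r y / q y)
    (hint : Integrable (fun x₀ => pbias x₀ * k x x₀ * w x *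
      ‖s₁ - gradient (fun y => Real.log (k y x₀)) x
        - gradient (fun y => Real.log (w y)) x‖ ^ 2) ν) :
    ∫ x₀, (pbias x₀ * k x x₀ * w x *
        ‖s₁ - gradient (fun y => Real.log (k y x₀)) x
          - gradient (fun y => Real.log (w y)) x‖ ^ 2
      - pbias x₀ * k x x₀ * w x *
        ‖s₂ - gradient (fun y => Real.log (k y x₀)) x
          - gradient (fun y => Real.log (w y)) x‖ ^ 2) ∂ν
    = r x * ‖s₁ - gradient (fun y => Real.log (r y)) x‖ ^ 2
      - r x * ‖s₂ - gradient (fun y => Real.log (r y)) x‖ ^ 2 := by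
  have hlogk : ∀ x₀, gradient (fun y => Real.log (k y x₀)) x
      = (k x x₀)⁻¹ • gradient (fun y => k y x₀) x :=
    fun x₀ => gradient_log (hk_diff x₀) (hk_pos x₀).ne'
  simp_rw [hlogk] at hint ⊢
  have hpk : Integrable (fun x₀ => pbias x₀ * k x x₀) ν :=
    .of_integral_ne_zero (hq_def ▸ (hq_pos x).ne')
  have hw_pos : 0 < w x := hw x ▸ div_pos (hr_pos x) (hq_pos x)
  have hpG : Integrable (fun x₀ => pbias x₀ • gradient (fun y => k y x₀) x) ν :=
    integrable_smul_of_mul_norm_sub_inv_smul_sq hpbias_nonneg hk_pos hw_pos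
      hpbias_meas.aestronglyMeasurable
      (stronglyMeasurable_gradient_apply_of_measurable hk_meas hk_diff).aestronglyMeasurable
      hpk hint
  rw [integral_denoising_sub_eq (fun x₀ => (hk_pos x₀).ne') hpk hpG, ← hq_def, ← hq_grad,
    score_matching_sub_eq s₁ s₂ hq_diff hr_diff hq_pos hr_pos hw]

theorem sm_sub_eq_dsm_sub [MeasurableSpace E] {μ : Measure E} [SFinite μ] [SFinite ν]
    (s₁ s₂ : E → E) (hpbias_meas : Measurable pbias) (hpbias_nonneg : ∀ x₀, 0 ≤ pbias x₀)
    (hk_meas : ∀ y, Measurable (k y)) (hk_pos : ∀ x₀ x, 0 < k x x₀)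
    (hk_diff : ∀ x₀, Differentiable ℝ fun x => k x x₀)
    (hq_def : ∀ x, q x = ∫ x₀, pbias x₀ * k x x₀ ∂ν) (hq_pos : ∀ x, 0 < q x)
    (hq_diff : Differentiable ℝ q)
    (hq_grad : ∀ x, gradient q x = ∫ x₀, pbias x₀ • gradient (fun y => k y x₀) x ∂ν)
    (hr_pos : ∀ x, 0 < r x) (hr_diff : Differentiable ℝ r) (hw : ∀ x, w x = r x / q x)
    (hint_sm₁ : Integrable (fun x =>
      r x * ‖s₁ x - gradient (fun y => Real.log (r y)) x‖ ^ 2) μ)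
    (hint_sm₂ : Integrable (fun x =>
      r x * ‖s₂ x - gradient (fun y => Real.log (r y)) x‖ ^ 2) μ)
    (hint_dsm₁ : Integrable (fun p : E × α => pbias p.2 * k p.1 p.2 * w p.1 *
      ‖s₁ p.1 - gradient (fun y => Real.log (k y p.2)) p.1
        - gradient (fun y => Real.log (w y)) p.1‖ ^ 2) (μ.prod ν))
    (hint_dsm₂ : Integrable (fun p : E × α => pbias p.2 * k p.1 p.2 * w p.1 *
      ‖s₂ p.1 - gradient (fun y => Real.log (k y p.2)) p.1
        - gradient (fun y => Real.log (w y)) p.1‖ ^ 2) (μ.prod ν)) :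
    (∫ x, r x * ‖s₁ x - gradient (fun y => Real.log (r y)) x‖ ^ 2 ∂μ)
      - (∫ x, r x * ‖s₂ x - gradient (fun y => Real.log (r y)) x‖ ^ 2 ∂μ)
    = (∫ x₀, ∫ x, pbias x₀ * k x x₀ * w x *
        ‖s₁ x - gradient (fun y => Real.log (k y x₀)) x
          - gradient (fun y => Real.log (w y)) x‖ ^ 2 ∂μ ∂ν)
      - (∫ x₀, ∫ x, pbias x₀ * k x x₀ * w x *
        ‖s₂ x - gradient (fun y => Real.log (k y x₀)) x
          - gradient (fun y => Real.log (w y)) x‖ ^ 2 ∂μ ∂ν) := by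
  refine (integral_integral_swap_sub_eq hint_dsm₁ hint_dsm₂ hint_sm₁ hint_sm₂ ?_).symm
  filter_upwards [hint_dsm₁.prod_right_ae] with x hx
  exact integral_dsm_sub_eq_sm_sub x (s₁ x) (s₂ x) hpbias_meas hpbias_nonneg hk_meas
    (fun x₀ => hk_pos x₀ x) (fun x₀ => hk_diff x₀ x) (hq_def x) hq_pos (hq_diff x) (hq_grad x)
    hr_pos (hr_diff x) hw hx

end DensityRatio

theorem integral_mul_sub_eq_of_ae_sub_eq {γ : Type*} [MeasurableSpace γ] {ρ : Measure γ}
    {lam f₁ f₂ g₁ g₂ : γ → ℝ} (hf₁ : Integrable (fun t => lam t * f₁ t) ρ)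
    (hf₂ : Integrable (fun t => lam t * f₂ t) ρ) (hg₁ : Integrable (fun t => lam t * g₁ t) ρ)
    (hg₂ : Integrable (fun t => lam t * g₂ t) ρ) (h : ∀ᵐ t ∂ρ, f₁ t - f₂ t = g₁ t - g₂ t) :
    ∫ t, lam t * f₁ t ∂ρ - ∫ t, lam t * f₂ t ∂ρ = ∫ t, lam t * g₁ t ∂ρ - ∫ t, lam t * g₂ t ∂ρ := by
  rw [← integral_sub hf₁ hf₂, ← integral_sub hg₁ hg₂]
  refine integral_congr_ae ?_
  filter_upwards [h] with t ht
  simp only [← mul_sub, ht]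

theorem tiw_dsm_eq_sm_up_to_const_general
    {d : ℕ}
    -- time horizon and temporal weighting
    (T : ℝ)
    (lam : ℝ → ℝ)
    -- the strictly positive probability densities p_bias and p_data
    (pbias : EuclideanSpace ℝ (Fin d) → ℝ)
    (hpbias_meas : Measurable pbias) (hpbias_pos : ∀ x₀, 0 < pbias x₀)
    -- the time-indexed transition kernels k_t, t ∈ (0, T]
    (k : ℝ → EuclideanSpace ℝ (Fin d) → EuclideanSpace ℝ (Fin d) → ℝ)
    (hk_meas : ∀ t ∈ Set.Ioc 0 T, Measurable (Function.uncurry (k t)))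
    (hk_pos : ∀ t ∈ Set.Ioc 0 T, ∀ x₀ x, 0 < k t x x₀)
    (hk_smooth : ∀ t ∈ Set.Ioc 0 T, ∀ x₀, ContDiff ℝ 1 fun x => k t x x₀)
    -- the perturbed marginals q_t (of p_bias) and r_t (of p_data): strictly
    -- positive, differentiable, with differentiation under the integral sign
    (q r : ℝ → EuclideanSpace ℝ (Fin d) → ℝ)
    (hq_def : ∀ t ∈ Set.Ioc 0 T, ∀ x, q t x = ∫ x₀, pbias x₀ * k t x x₀)
    (hq_pos : ∀ t ∈ Set.Ioc 0 T, ∀ x, 0 < q t x)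
    (hq_diff : ∀ t ∈ Set.Ioc 0 T, Differentiable ℝ (q t))
    (hq_grad : ∀ t ∈ Set.Ioc 0 T, ∀ x,
      gradient (q t) x = ∫ x₀, pbias x₀ • gradient (fun y => k t y x₀) x)
    (hr_pos : ∀ t ∈ Set.Ioc 0 T, ∀ x, 0 < r t x)
    (hr_diff : ∀ t ∈ Set.Ioc 0 T, Differentiable ℝ (r t))
    -- the time-dependent density ratio w_t = r_t / q_t
    (w : ℝ → EuclideanSpace ℝ (Fin d) → ℝ)
    (hw_def : ∀ t ∈ Set.Ioc 0 T, ∀ x, w t x = r t x / q t x)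
    -- the two time-dependent vector fields
    (s₁ s₂ : ℝ → EuclideanSpace ℝ (Fin d) → EuclideanSpace ℝ (Fin d))
    -- all integrals below are assumed finite
    (hint_sm₁ : ∀ t ∈ Set.Ioc 0 T, Integrable fun x =>
      r t x * ‖s₁ t x - gradient (fun y => Real.log (r t y)) x‖ ^ 2)
    (hint_sm₂ : ∀ t ∈ Set.Ioc 0 T, Integrable fun x =>
      r t x * ‖s₂ t x - gradient (fun y => Real.log (r t y)) x‖ ^ 2)
    (hint_dsm₁ : ∀ t ∈ Set.Ioc 0 T,
      Integrable fun p : EuclideanSpace ℝ (Fin d) × EuclideanSpace ℝ (Fin d) =>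
        pbias p.2 * k t p.1 p.2 * w t p.1 *
          ‖s₁ t p.1 - gradient (fun y => Real.log (k t y p.2)) p.1
            - gradient (fun y => Real.log (w t y)) p.1‖ ^ 2)
    (hint_dsm₂ : ∀ t ∈ Set.Ioc 0 T,
      Integrable fun p : EuclideanSpace ℝ (Fin d) × EuclideanSpace ℝ (Fin d) =>
        pbias p.2 * k t p.1 p.2 * w t p.1 *
          ‖s₂ t p.1 - gradient (fun y => Real.log (k t y p.2)) p.1
            - gradient (fun y => Real.log (w t y)) p.1‖ ^ 2)
    (hint_t_sm₁ : IntegrableOn (fun t => lam t *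
      ∫ x, r t x * ‖s₁ t x - gradient (fun y => Real.log (r t y)) x‖ ^ 2)
      (Set.Ioc 0 T))
    (hint_t_sm₂ : IntegrableOn (fun t => lam t *
      ∫ x, r t x * ‖s₂ t x - gradient (fun y => Real.log (r t y)) x‖ ^ 2)
      (Set.Ioc 0 T))
    (hint_t_dsm₁ : IntegrableOn (fun t => lam t *
      ∫ x₀, ∫ x, pbias x₀ * k t x x₀ * w t x *
        ‖s₁ t x - gradient (fun y => Real.log (k t y x₀)) x
          - gradient (fun y => Real.log (w t y)) x‖ ^ 2) (Set.Ioc 0 T))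
    (hint_t_dsm₂ : IntegrableOn (fun t => lam t *
      ∫ x₀, ∫ x, pbias x₀ * k t x x₀ * w t x *
        ‖s₂ t x - gradient (fun y => Real.log (k t y x₀)) x
          - gradient (fun y => Real.log (w t y)) x‖ ^ 2) (Set.Ioc 0 T)) :
    (1 / 2) * (∫ t in Set.Ioc 0 T, lam t *
        ∫ x, r t x * ‖s₁ t x - gradient (fun y => Real.log (r t y)) x‖ ^ 2)
      - (1 / 2) * (∫ t in Set.Ioc 0 T, lam t *
        ∫ x, r t x * ‖s₂ t x - gradient (fun y => Real.log (r t y)) x‖ ^ 2)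
    = (1 / 2) * (∫ t in Set.Ioc 0 T, lam t *
        ∫ x₀, ∫ x, pbias x₀ * k t x x₀ * w t x *
          ‖s₁ t x - gradient (fun y => Real.log (k t y x₀)) x
            - gradient (fun y => Real.log (w t y)) x‖ ^ 2)
      - (1 / 2) * (∫ t in Set.Ioc 0 T, lam t *
        ∫ x₀, ∫ x, pbias x₀ * k t x x₀ * w t x *
          ‖s₂ t x - gradient (fun y => Real.log (k t y x₀)) x
            - gradient (fun y => Real.log (w t y)) x‖ ^ 2) := by
  have hsub := integral_mul_sub_eq_of_ae_sub_eq hint_t_sm₁ hint_t_sm₂ hint_t_dsm₁ hint_t_dsm₂ <|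
    ae_restrict_of_forall_mem measurableSet_Ioc fun t ht =>
      sm_sub_eq_dsm_sub (s₁ t) (s₂ t) hpbias_meas (fun x₀ => (hpbias_pos x₀).le)
        (fun y => (hk_meas t ht).comp measurable_prodMk_left) (hk_pos t ht)
        (fun x₀ => (hk_smooth t ht x₀).differentiable one_ne_zero) (hq_def t ht) (hq_pos t ht)
        (hq_diff t ht) (hq_grad t ht) (hr_pos t ht) (hr_diff t ht) (hw_def t ht)
        (hint_sm₁ t ht) (hint_sm₂ t ht) (hint_dsm₁ t ht) (hint_dsm₂ t ht)
  linarith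

/-- **Theorem 1 (TIW-DSM equals score matching up to a constant)** from
"Training Unbiased Diffusion Models From Biased Dataset".
For every pair of measurable time-dependent vector fields `s₁, s₂` with all
integrals finite, the time-dependent importance-reweighted denoising
score-matching objective `L_TIW-DSM(s; p_bias, w_t)` and the score-matching
objective `L_SM(s; p_data)` differ by a constant not depending on the field:
their differences at `s₁` and `s₂` coincide. -/
theorem tiw_dsm_eq_sm_up_to_const
    {d : ℕ} (hd : 1 ≤ d)
    -- time horizon and temporal weighting
    (T : ℝ) (hT : 0 < T)
    (lam : ℝ → ℝ) (hlam_meas : Measurable lam)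
    (hlam_nonneg : ∀ t ∈ Set.Ioc 0 T, 0 ≤ lam t)
    -- the strictly positive probability densities p_bias and p_data
    (pbias pdata : EuclideanSpace ℝ (Fin d) → ℝ)
    (hpbias_meas : Measurable pbias) (hpbias_pos : ∀ x₀, 0 < pbias x₀)
    (hpbias_prob : ∫ x₀, pbias x₀ = 1)
    (hpdata_meas : Measurable pdata) (hpdata_pos : ∀ x₀, 0 < pdata x₀)
    (hpdata_prob : ∫ x₀, pdata x₀ = 1)
    -- the time-indexed transition kernels k_t, t ∈ (0, T]
    (k : ℝ → EuclideanSpace ℝ (Fin d) → EuclideanSpace ℝ (Fin d) → ℝ)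
    (hk_meas : ∀ t ∈ Set.Ioc 0 T, Measurable (Function.uncurry (k t)))
    (hk_pos : ∀ t ∈ Set.Ioc 0 T, ∀ x₀ x, 0 < k t x x₀)
    (hk_prob : ∀ t ∈ Set.Ioc 0 T, ∀ x₀, ∫ x, k t x x₀ = 1)
    (hk_smooth : ∀ t ∈ Set.Ioc 0 T, ∀ x₀, ContDiff ℝ 1 fun x => k t x x₀)
    -- the perturbed marginals q_t (of p_bias) and r_t (of p_data): strictly
    -- positive, differentiable, with differentiation under the integral sign
    (q r : ℝ → EuclideanSpace ℝ (Fin d) → ℝ)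
    (hq_def : ∀ t ∈ Set.Ioc 0 T, ∀ x, q t x = ∫ x₀, pbias x₀ * k t x x₀)
    (hq_pos : ∀ t ∈ Set.Ioc 0 T, ∀ x, 0 < q t x)
    (hq_diff : ∀ t ∈ Set.Ioc 0 T, Differentiable ℝ (q t))
    (hq_grad : ∀ t ∈ Set.Ioc 0 T, ∀ x,
      gradient (q t) x = ∫ x₀, pbias x₀ • gradient (fun y => k t y x₀) x)
    (hr_def : ∀ t ∈ Set.Ioc 0 T, ∀ x, r t x = ∫ x₀, pdata x₀ * k t x x₀)
    (hr_pos : ∀ t ∈ Set.Ioc 0 T, ∀ x, 0 < r t x)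
    (hr_diff : ∀ t ∈ Set.Ioc 0 T, Differentiable ℝ (r t))
    (hr_grad : ∀ t ∈ Set.Ioc 0 T, ∀ x,
      gradient (r t) x = ∫ x₀, pdata x₀ • gradient (fun y => k t y x₀) x)
    -- the time-dependent density ratio w_t = r_t / q_t
    (w : ℝ → EuclideanSpace ℝ (Fin d) → ℝ)
    (hw_def : ∀ t ∈ Set.Ioc 0 T, ∀ x, w t x = r t x / q t x)
    -- the two time-dependent vector fields
    (s₁ s₂ : ℝ → EuclideanSpace ℝ (Fin d) → EuclideanSpace ℝ (Fin d))
    (hs₁_meas : Measurable fun p : ℝ × EuclideanSpace ℝ (Fin d) => s₁ p.1 p.2)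
    (hs₂_meas : Measurable fun p : ℝ × EuclideanSpace ℝ (Fin d) => s₂ p.1 p.2)
    -- all integrals below are assumed finite
    (hint_sm₁ : ∀ t ∈ Set.Ioc 0 T, Integrable fun x =>
      r t x * ‖s₁ t x - gradient (fun y => Real.log (r t y)) x‖ ^ 2)
    (hint_sm₂ : ∀ t ∈ Set.Ioc 0 T, Integrable fun x =>
      r t x * ‖s₂ t x - gradient (fun y => Real.log (r t y)) x‖ ^ 2)
    (hint_dsm₁ : ∀ t ∈ Set.Ioc 0 T,
      Integrable fun p : EuclideanSpace ℝ (Fin d) × EuclideanSpace ℝ (Fin d) =>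
        pbias p.2 * k t p.1 p.2 * w t p.1 *
          ‖s₁ t p.1 - gradient (fun y => Real.log (k t y p.2)) p.1
            - gradient (fun y => Real.log (w t y)) p.1‖ ^ 2)
    (hint_dsm₂ : ∀ t ∈ Set.Ioc 0 T,
      Integrable fun p : EuclideanSpace ℝ (Fin d) × EuclideanSpace ℝ (Fin d) =>
        pbias p.2 * k t p.1 p.2 * w t p.1 *
          ‖s₂ t p.1 - gradient (fun y => Real.log (k t y p.2)) p.1
            - gradient (fun y => Real.log (w t y)) p.1‖ ^ 2)
    (hint_t_sm₁ : IntegrableOn (fun t => lam t *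
      ∫ x, r t x * ‖s₁ t x - gradient (fun y => Real.log (r t y)) x‖ ^ 2)
      (Set.Ioc 0 T))
    (hint_t_sm₂ : IntegrableOn (fun t => lam t *
      ∫ x, r t x * ‖s₂ t x - gradient (fun y => Real.log (r t y)) x‖ ^ 2)
      (Set.Ioc 0 T))
    (hint_t_dsm₁ : IntegrableOn (fun t => lam t *
      ∫ x₀, ∫ x, pbias x₀ * k t x x₀ * w t x *
        ‖s₁ t x - gradient (fun y => Real.log (k t y x₀)) x
          - gradient (fun y => Real.log (w t y)) x‖ ^ 2) (Set.Ioc 0 T))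
    (hint_t_dsm₂ : IntegrableOn (fun t => lam t *
      ∫ x₀, ∫ x, pbias x₀ * k t x x₀ * w t x *
        ‖s₂ t x - gradient (fun y => Real.log (k t y x₀)) x
          - gradient (fun y => Real.log (w t y)) x‖ ^ 2) (Set.Ioc 0 T)) :
    (1 / 2) * (∫ t in Set.Ioc 0 T, lam t *
        ∫ x, r t x * ‖s₁ t x - gradient (fun y => Real.log (r t y)) x‖ ^ 2)
      - (1 / 2) * (∫ t in Set.Ioc 0 T, lam t *
        ∫ x, r t x * ‖s₂ t x - gradient (fun y => Real.log (r t y)) x‖ ^ 2)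
    = (1 / 2) * (∫ t in Set.Ioc 0 T, lam t *
        ∫ x₀, ∫ x, pbias x₀ * k t x x₀ * w t x *
          ‖s₁ t x - gradient (fun y => Real.log (k t y x₀)) x
            - gradient (fun y => Real.log (w t y)) x‖ ^ 2)
      - (1 / 2) * (∫ t in Set.Ioc 0 T, lam t *
        ∫ x₀, ∫ x, pbias x₀ * k t x x₀ * w t x *
          ‖s₂ t x - gradient (fun y => Real.log (k t y x₀)) x
            - gradient (fun y => Real.log (w t y)) x‖ ^ 2) :=
  tiw_dsm_eq_sm_up_to_const_general T lam pbias hpbias_meas hpbias_pos k hk_meas hk_pos hk_smooth q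
    r hq_def hq_pos hq_diff hq_grad hr_pos hr_diff w hw_def s₁ s₂ hint_sm₁ hint_sm₂ hint_dsm₁
    hint_dsm₂ hint_t_sm₁ hint_t_sm₂ hint_t_dsm₁ hint_t_dsm₂
end

section
/- Score-correction-only objective converges to the unbiased score (Appendix A.5, equations 38–41). Let k be a transition kernel, let q and r be the perturbed marginals of the strictly positive probability densities p_bias and p_data under k, and let w := r/q. Define J(s) := (1/2)∫∫ p_bias(x₀) k(x,x₀) ‖s(x) − ∇ log k(x,x₀) − ∇ log w(x)‖² dx dx₀ for measurable vector fields s : ℝ^d → ℝ^d with all integrals finite. Then for every admissible s, J(s) − J(s*) = (1/2)∫ q(x) ‖s(x) − ∇ log r(x)‖² dx ≥ 0 with s*(x) := ∇ log r(x) = ∇ log q(x) + ∇ log w(x); hence s* minimizes J and any minimizer agrees with the unbiased score ∇ log r Lebesgue-almost everywhere. -/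
open MeasureTheory InnerProductSpace Filter

variable {E : Type*} [NormedAddCommGroup E] [InnerProductSpace ℝ E] [CompleteSpace E]

lemma gradlog (f : E → ℝ) (x : E) (hf : DifferentiableAt ℝ f x) (hx : f x ≠ 0) :
    gradient (fun y => Real.log (f y)) x = (f x)⁻¹ • gradient f x := by
  have h := (hf.hasFDerivAt.log hx)
  unfold gradient
  rw [h.fderiv, _root_.map_smul]

lemma gradsub (f g : E → ℝ) (x : E) (hf : DifferentiableAt ℝ f x) (hg : DifferentiableAt ℝ g x) :
    gradient (fun y => f y - g y) x = gradient f x - gradient g x := by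
  unfold gradient
  rw [fderiv_fun_sub hf hg, map_sub]

lemma grad_repr {ι : Type*} [Fintype ι] (b : OrthonormalBasis ι ℝ E) (g : E → ℝ) (x : E) :
    gradient g x = ∑ i, (fderiv ℝ g x (b i)) • b i := by
  conv_lhs => rw [← b.sum_repr' (gradient g x)]
  congr 1; ext i
  rw [real_inner_comm]
  congr 1
  exact InnerProductSpace.toDual_symm_apply

lemma integrable_of_integral_ne_zero {α : Type*} [MeasurableSpace α] {μ : Measure α}
    {f : α → ℝ} (h : ∫ x, f x ∂μ ≠ 0) : Integrable f μ := by
  by_contra hc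
  exact h (integral_undef hc)

open Filter in
lemma meas_grad_param {d : ℕ} (k : EuclideanSpace ℝ (Fin d) → EuclideanSpace ℝ (Fin d) → ℝ)
    (hk_meas : Measurable (Function.uncurry k))
    (hk_smooth : ∀ x₀, ContDiff ℝ 1 fun x => k x x₀) (x : EuclideanSpace ℝ (Fin d)) :
    Measurable (fun x₀ => gradient (fun y => k y x₀) x) := by
  have hfd : ∀ v : EuclideanSpace ℝ (Fin d),
      Measurable (fun x₀ => fderiv ℝ (fun y => k y x₀) x v) := by
    intro v
    have hmn : ∀ n : ℕ, Measurable (fun x₀ =>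
        ((n : ℝ) + 1) * (k (x + ((n : ℝ) + 1)⁻¹ • v) x₀ - k x x₀)) := by
      intro n
      have h1 : Measurable (fun x₀ => k (x + ((n : ℝ) + 1)⁻¹ • v) x₀) :=
        hk_meas.comp (measurable_prodMk_left)
      have h2 : Measurable (fun x₀ => k x x₀) := hk_meas.comp (measurable_prodMk_left)
      exact (measurable_const.mul (h1.sub h2))
    have hc : Tendsto (fun n : ℕ => ‖(n : ℝ) + 1‖) atTop atTop := by
      have : Tendsto (fun n : ℕ => (n : ℝ) + 1) atTop atTop :=
        tendsto_atTop_add_const_right _ 1 tendsto_natCast_atTop_atTop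
      refine this.congr' ?_
      filter_upwards with n
      rw [Real.norm_eq_abs, abs_of_nonneg (by positivity)]
    refine measurable_of_tendsto_metrizable hmn (tendsto_pi_nhds.mpr fun x₀ => ?_)
    simpa [smul_eq_mul] using
      ((((hk_smooth x₀).differentiable one_ne_zero).differentiableAt.hasFDerivAt).lim v hc)
  have hrepr : ∀ x₀, gradient (fun y => k y x₀) x =
      ∑ i, (fderiv ℝ (fun y => k y x₀) x (EuclideanSpace.basisFun (Fin d) ℝ i)) •
        (EuclideanSpace.basisFun (Fin d) ℝ i : EuclideanSpace ℝ (Fin d)) := fun x₀ =>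
    grad_repr (EuclideanSpace.basisFun (Fin d) ℝ) _ x
  simp only [hrepr]
  exact Finset.measurable_sum _ fun i _ => (hfd _).smul_const _

set_option maxHeartbeats 1000000 in
/-- **Score-correction-only objective converges to the unbiased score**
(Appendix A.5, equations 38–41, of "Training Unbiased Diffusion Models From
Biased Dataset").  With
`J(s) := (1/2)∫∫ p_bias(x₀) k(x,x₀) ‖s(x) − ∇ log k(x,x₀) − ∇ log w(x)‖² dx dx₀`
and `s* := ∇ log r = ∇ log q + ∇ log w`, for every admissible `s`,
`J(s) − J(s*) = (1/2)∫ q(x) ‖s(x) − ∇ log r(x)‖² dx ≥ 0`; hence `s*` minimizes `J`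
and any minimizer agrees with the unbiased score `∇ log r` Lebesgue-a.e. -/
theorem score_correction_only_objective
    {d : ℕ} (hd : 1 ≤ d)
    (pbias pdata : EuclideanSpace ℝ (Fin d) → ℝ)
    (hpbias_meas : Measurable pbias) (hpbias_pos : ∀ x₀, 0 < pbias x₀)
    (hpbias_prob : ∫ x₀, pbias x₀ = 1)
    (hpdata_meas : Measurable pdata) (hpdata_pos : ∀ x₀, 0 < pdata x₀)
    (hpdata_prob : ∫ x₀, pdata x₀ = 1)
    (k : EuclideanSpace ℝ (Fin d) → EuclideanSpace ℝ (Fin d) → ℝ)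
    (hk_meas : Measurable (Function.uncurry k))
    (hk_pos : ∀ x₀ x, 0 < k x x₀)
    (hk_prob : ∀ x₀, ∫ x, k x x₀ = 1)
    (hk_smooth : ∀ x₀, ContDiff ℝ 1 fun x => k x x₀)
    (q r : EuclideanSpace ℝ (Fin d) → ℝ)
    (hq_def : ∀ x, q x = ∫ x₀, pbias x₀ * k x x₀)
    (hq_pos : ∀ x, 0 < q x) (hq_diff : Differentiable ℝ q)
    (hq_grad : ∀ x, gradient q x = ∫ x₀, pbias x₀ • gradient (fun y => k y x₀) x)
    (hr_def : ∀ x, r x = ∫ x₀, pdata x₀ * k x x₀)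
    (hr_pos : ∀ x, 0 < r x) (hr_diff : Differentiable ℝ r)
    (hr_grad : ∀ x, gradient r x = ∫ x₀, pdata x₀ • gradient (fun y => k y x₀) x)
    (w : EuclideanSpace ℝ (Fin d) → ℝ)
    (hw_def : ∀ x, w x = r x / q x)
    -- the optimal field s* = ∇ log r is itself admissible
    (hstar_int : Integrable fun p : EuclideanSpace ℝ (Fin d) × EuclideanSpace ℝ (Fin d) =>
      pbias p.2 * k p.1 p.2 *
        ‖gradient (fun y => Real.log (r y)) p.1
          - gradient (fun y => Real.log (k y p.2)) p.1
          - gradient (fun y => Real.log (w y)) p.1‖ ^ 2) :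
    -- s* = ∇ log r = ∇ log q + ∇ log w
    (∀ x, gradient (fun y => Real.log (r y)) x
        = gradient (fun y => Real.log (q y)) x + gradient (fun y => Real.log (w y)) x)
    ∧
    -- J(s) − J(s*) = (1/2)∫ q ‖s − ∇ log r‖² ≥ 0 for every admissible s
    (∀ s : EuclideanSpace ℝ (Fin d) → EuclideanSpace ℝ (Fin d),
      Measurable s →
      Integrable (fun p : EuclideanSpace ℝ (Fin d) × EuclideanSpace ℝ (Fin d) =>
        pbias p.2 * k p.1 p.2 *
          ‖s p.1 - gradient (fun y => Real.log (k y p.2)) p.1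
            - gradient (fun y => Real.log (w y)) p.1‖ ^ 2) →
      Integrable (fun x => q x * ‖s x - gradient (fun y => Real.log (r y)) x‖ ^ 2) →
      (1 / 2) * (∫ x₀, ∫ x, pbias x₀ * k x x₀ *
          ‖s x - gradient (fun y => Real.log (k y x₀)) x
            - gradient (fun y => Real.log (w y)) x‖ ^ 2)
        - (1 / 2) * (∫ x₀, ∫ x, pbias x₀ * k x x₀ *
          ‖gradient (fun y => Real.log (r y)) x
            - gradient (fun y => Real.log (k y x₀)) x
            - gradient (fun y => Real.log (w y)) x‖ ^ 2)
      = (1 / 2) * ∫ x, q x * ‖s x - gradient (fun y => Real.log (r y)) x‖ ^ 2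
      ∧ 0 ≤ (1 / 2) * ∫ x, q x * ‖s x - gradient (fun y => Real.log (r y)) x‖ ^ 2)
    ∧
    -- hence s* minimizes J
    (∀ s : EuclideanSpace ℝ (Fin d) → EuclideanSpace ℝ (Fin d),
      Measurable s →
      Integrable (fun p : EuclideanSpace ℝ (Fin d) × EuclideanSpace ℝ (Fin d) =>
        pbias p.2 * k p.1 p.2 *
          ‖s p.1 - gradient (fun y => Real.log (k y p.2)) p.1
            - gradient (fun y => Real.log (w y)) p.1‖ ^ 2) →
      Integrable (fun x => q x * ‖s x - gradient (fun y => Real.log (r y)) x‖ ^ 2) →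
      (1 / 2) * (∫ x₀, ∫ x, pbias x₀ * k x x₀ *
          ‖gradient (fun y => Real.log (r y)) x
            - gradient (fun y => Real.log (k y x₀)) x
            - gradient (fun y => Real.log (w y)) x‖ ^ 2)
        ≤ (1 / 2) * ∫ x₀, ∫ x, pbias x₀ * k x x₀ *
            ‖s x - gradient (fun y => Real.log (k y x₀)) x
              - gradient (fun y => Real.log (w y)) x‖ ^ 2)
    ∧
    -- any admissible minimizer agrees with ∇ log r Lebesgue-a.e.
    (∀ s : EuclideanSpace ℝ (Fin d) → EuclideanSpace ℝ (Fin d),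
      Measurable s →
      Integrable (fun p : EuclideanSpace ℝ (Fin d) × EuclideanSpace ℝ (Fin d) =>
        pbias p.2 * k p.1 p.2 *
          ‖s p.1 - gradient (fun y => Real.log (k y p.2)) p.1
            - gradient (fun y => Real.log (w y)) p.1‖ ^ 2) →
      Integrable (fun x => q x * ‖s x - gradient (fun y => Real.log (r y)) x‖ ^ 2) →
      (1 / 2) * (∫ x₀, ∫ x, pbias x₀ * k x x₀ *
          ‖s x - gradient (fun y => Real.log (k y x₀)) x
            - gradient (fun y => Real.log (w y)) x‖ ^ 2)
        ≤ (1 / 2) * (∫ x₀, ∫ x, pbias x₀ * k x x₀ *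
            ‖gradient (fun y => Real.log (r y)) x
              - gradient (fun y => Real.log (k y x₀)) x
              - gradient (fun y => Real.log (w y)) x‖ ^ 2) →
      s =ᵐ[volume] fun x => gradient (fun y => Real.log (r y)) x) := by
  classical
  have hqne : ∀ x, q x ≠ 0 := fun x => (hq_pos x).ne'
  have hrne : ∀ x, r x ≠ 0 := fun x => (hr_pos x).ne'
  have hkne : ∀ x₀ x, k x x₀ ≠ 0 := fun x₀ x => (hk_pos x₀ x).ne'
  have hkdiff : ∀ x₀ x, DifferentiableAt ℝ (fun y => k y x₀) x := fun x₀ x =>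
    ((hk_smooth x₀).differentiable one_ne_zero).differentiableAt
  have hglr : ∀ x, gradient (fun y => Real.log (r y)) x = (r x)⁻¹ • gradient r x :=
    fun x => gradlog r x (hr_diff x) (hrne x)
  have hglq : ∀ x, gradient (fun y => Real.log (q y)) x = (q x)⁻¹ • gradient q x :=
    fun x => gradlog q x (hq_diff x) (hqne x)
  have hglk : ∀ x₀ x, gradient (fun y => Real.log (k y x₀)) x
      = (k x x₀)⁻¹ • gradient (fun y => k y x₀) x :=
    fun x₀ x => gradlog _ x (hkdiff x₀ x) (hkne x₀ x)
  have hglw : ∀ x, gradient (fun y => Real.log (w y)) x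
      = gradient (fun y => Real.log (r y)) x - gradient (fun y => Real.log (q y)) x := by
    intro x
    have hfun : (fun y => Real.log (w y)) = fun y => Real.log (r y) - Real.log (q y) :=
      funext fun y => by rw [hw_def, Real.log_div (hrne y) (hqne y)]
    rw [hfun]
    exact gradsub _ _ x ((hr_diff x).log (hrne x)) ((hq_diff x).log (hqne x))
  have part1 : ∀ x, gradient (fun y => Real.log (r y)) x
      = gradient (fun y => Real.log (q y)) x + gradient (fun y => Real.log (w y)) x := by
    intro x; rw [hglw x]; abel
  have hgr_meas : Measurable fun x => gradient r x :=
    ((InnerProductSpace.toDual ℝ (EuclideanSpace ℝ (Fin d))).symm.continuous.measurable).comp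
      (measurable_fderiv ℝ r)
  have hglr_meas : Measurable fun x => gradient (fun y => Real.log (r y)) x := by
    simp only [hglr]
    exact (hr_diff.continuous.measurable.inv).smul hgr_meas
  have hqk_int : ∀ x, Integrable (fun x₀ => pbias x₀ * k x x₀) := by
    intro x
    apply integrable_of_integral_ne_zero
    rw [← hq_def x]; exact hqne x
  have hvol : (volume : Measure (EuclideanSpace ℝ (Fin d) × EuclideanSpace ℝ (Fin d)))
      = (volume : Measure (EuclideanSpace ℝ (Fin d))).prod volume := Measure.volume_eq_prod _ _
  -- key identity
  have key : ∀ s : EuclideanSpace ℝ (Fin d) → EuclideanSpace ℝ (Fin d),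
      Measurable s →
      Integrable (fun p : EuclideanSpace ℝ (Fin d) × EuclideanSpace ℝ (Fin d) =>
        pbias p.2 * k p.1 p.2 *
          ‖s p.1 - gradient (fun y => Real.log (k y p.2)) p.1
            - gradient (fun y => Real.log (w y)) p.1‖ ^ 2) →
      Integrable (fun x => q x * ‖s x - gradient (fun y => Real.log (r y)) x‖ ^ 2) →
      (∫ x₀, ∫ x, pbias x₀ * k x x₀ *
          ‖s x - gradient (fun y => Real.log (k y x₀)) x
            - gradient (fun y => Real.log (w y)) x‖ ^ 2)
        - (∫ x₀, ∫ x, pbias x₀ * k x x₀ *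
          ‖gradient (fun y => Real.log (r y)) x
            - gradient (fun y => Real.log (k y x₀)) x
            - gradient (fun y => Real.log (w y)) x‖ ^ 2)
      = ∫ x, q x * ‖s x - gradient (fun y => Real.log (r y)) x‖ ^ 2 := by
    intro s hs hFs0 hQ
    have hFs : Integrable (fun p : EuclideanSpace ℝ (Fin d) × EuclideanSpace ℝ (Fin d) =>
        pbias p.2 * k p.1 p.2 *
          ‖s p.1 - gradient (fun y => Real.log (k y p.2)) p.1
            - gradient (fun y => Real.log (w y)) p.1‖ ^ 2)
        ((volume : Measure (EuclideanSpace ℝ (Fin d))).prod volume) := by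
      rw [← hvol]; exact hFs0
    have hFst : Integrable (fun p : EuclideanSpace ℝ (Fin d) × EuclideanSpace ℝ (Fin d) =>
        pbias p.2 * k p.1 p.2 *
          ‖gradient (fun y => Real.log (r y)) p.1
            - gradient (fun y => Real.log (k y p.2)) p.1
            - gradient (fun y => Real.log (w y)) p.1‖ ^ 2)
        ((volume : Measure (EuclideanSpace ℝ (Fin d))).prod volume) := by
      rw [← hvol]; exact hstar_int
    set Fs : EuclideanSpace ℝ (Fin d) × EuclideanSpace ℝ (Fin d) → ℝ :=
      fun p => pbias p.2 * k p.1 p.2 *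
        ‖s p.1 - gradient (fun y => Real.log (k y p.2)) p.1
          - gradient (fun y => Real.log (w y)) p.1‖ ^ 2 with hFsdef
    set Fst : EuclideanSpace ℝ (Fin d) × EuclideanSpace ℝ (Fin d) → ℝ :=
      fun p => pbias p.2 * k p.1 p.2 *
        ‖gradient (fun y => Real.log (r y)) p.1
          - gradient (fun y => Real.log (k y p.2)) p.1
          - gradient (fun y => Real.log (w y)) p.1‖ ^ 2 with hFstdef
    set G : EuclideanSpace ℝ (Fin d) × EuclideanSpace ℝ (Fin d) → ℝ :=
      fun p => pbias p.2 * k p.1 p.2 *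
        ‖s p.1 - gradient (fun y => Real.log (r y)) p.1‖ ^ 2 with hGdef
    have hFs_app : ∀ a b : EuclideanSpace ℝ (Fin d), Fs (a, b)
        = pbias b * k a b *
          ‖s a - gradient (fun y => Real.log (k y b)) a
            - gradient (fun y => Real.log (w y)) a‖ ^ 2 := fun _ _ => rfl
    have hFst_app : ∀ a b : EuclideanSpace ℝ (Fin d), Fst (a, b)
        = pbias b * k a b *
          ‖gradient (fun y => Real.log (r y)) a
            - gradient (fun y => Real.log (k y b)) a
            - gradient (fun y => Real.log (w y)) a‖ ^ 2 := fun _ _ => rfl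
    have hG_app : ∀ a b : EuclideanSpace ℝ (Fin d), G (a, b)
        = pbias b * k a b * ‖s a - gradient (fun y => Real.log (r y)) a‖ ^ 2 := fun _ _ => rfl
    have hG_meas : Measurable G := by
      rw [hGdef]
      exact ((hpbias_meas.comp measurable_snd).mul hk_meas).mul
        (((hs.comp measurable_fst).sub (hglr_meas.comp measurable_fst)).norm.pow_const 2)
    have hG_int : Integrable G ((volume : Measure (EuclideanSpace ℝ (Fin d))).prod volume) := by
      refine Integrable.mono' ((hFs.const_mul 2).add (hFst.const_mul 2))
        hG_meas.aestronglyMeasurable (ae_of_all _ fun p => ?_)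
      have hXY : (s p.1 - gradient (fun y => Real.log (k y p.2)) p.1
            - gradient (fun y => Real.log (w y)) p.1)
          - (gradient (fun y => Real.log (r y)) p.1
            - gradient (fun y => Real.log (k y p.2)) p.1
            - gradient (fun y => Real.log (w y)) p.1)
          = s p.1 - gradient (fun y => Real.log (r y)) p.1 := by abel
      have hb : ‖s p.1 - gradient (fun y => Real.log (r y)) p.1‖
          ≤ ‖s p.1 - gradient (fun y => Real.log (k y p.2)) p.1
              - gradient (fun y => Real.log (w y)) p.1‖
            + ‖gradient (fun y => Real.log (r y)) p.1
              - gradient (fun y => Real.log (k y p.2)) p.1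
              - gradient (fun y => Real.log (w y)) p.1‖ := by
        rw [← hXY]; exact norm_sub_le _ _
      have hk0 : (0:ℝ) ≤ pbias p.2 * k p.1 p.2 :=
        le_of_lt (mul_pos (hpbias_pos _) (hk_pos _ _))
      have hsq : ‖s p.1 - gradient (fun y => Real.log (r y)) p.1‖ ^ 2
          ≤ 2 * ‖s p.1 - gradient (fun y => Real.log (k y p.2)) p.1
              - gradient (fun y => Real.log (w y)) p.1‖ ^ 2
            + 2 * ‖gradient (fun y => Real.log (r y)) p.1
              - gradient (fun y => Real.log (k y p.2)) p.1
              - gradient (fun y => Real.log (w y)) p.1‖ ^ 2 := by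
        nlinarith [hb, norm_nonneg (s p.1 - gradient (fun y => Real.log (r y)) p.1),
          norm_nonneg (s p.1 - gradient (fun y => Real.log (k y p.2)) p.1
            - gradient (fun y => Real.log (w y)) p.1),
          norm_nonneg (gradient (fun y => Real.log (r y)) p.1
            - gradient (fun y => Real.log (k y p.2)) p.1
            - gradient (fun y => Real.log (w y)) p.1),
          sq_nonneg (‖s p.1 - gradient (fun y => Real.log (k y p.2)) p.1
              - gradient (fun y => Real.log (w y)) p.1‖
            - ‖gradient (fun y => Real.log (r y)) p.1
              - gradient (fun y => Real.log (k y p.2)) p.1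
              - gradient (fun y => Real.log (w y)) p.1‖)]
      have hGp : G p = pbias p.2 * k p.1 p.2 *
          ‖s p.1 - gradient (fun y => Real.log (r y)) p.1‖ ^ 2 := rfl
      have hFsp : Fs p = pbias p.2 * k p.1 p.2 *
          ‖s p.1 - gradient (fun y => Real.log (k y p.2)) p.1
            - gradient (fun y => Real.log (w y)) p.1‖ ^ 2 := rfl
      have hFstp : Fst p = pbias p.2 * k p.1 p.2 *
          ‖gradient (fun y => Real.log (r y)) p.1
            - gradient (fun y => Real.log (k y p.2)) p.1
            - gradient (fun y => Real.log (w y)) p.1‖ ^ 2 := rfl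
      simp only [Pi.add_apply]
      rw [show ‖G p‖ = |pbias p.2 * k p.1 p.2 *
          ‖s p.1 - gradient (fun y => Real.log (r y)) p.1‖ ^ 2| from rfl,
        hFsp, hFstp, abs_of_nonneg (by positivity)]
      nlinarith [mul_le_mul_of_nonneg_left hsq hk0]
    set C : EuclideanSpace ℝ (Fin d) × EuclideanSpace ℝ (Fin d) → ℝ :=
      fun p => (Fs p - G p - Fst p) / 2 with hCdef
    have hC_int : Integrable C ((volume : Measure (EuclideanSpace ℝ (Fin d))).prod volume) :=
      ((hFs.sub hG_int).sub hFst).div_const 2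
    have hCzero : (∫ p, C p ∂((volume : Measure (EuclideanSpace ℝ (Fin d))).prod volume)) = 0 := by
      rw [integral_prod C hC_int]
      have hae : (fun x => ∫ x₀, C (x, x₀)) =ᵐ[volume] (fun _ => (0:ℝ)) := by
        filter_upwards [hFst.prod_right_ae] with x hx
        have hgradk_meas := meas_grad_param k hk_meas hk_smooth x
        have hCV : ∀ x₀, C (x, x₀) =
            inner ℝ (s x - gradient (fun y => Real.log (r y)) x)
              ((pbias x₀ * k x x₀) • gradient (fun y => Real.log (q y)) x
                - pbias x₀ • gradient (fun y => k y x₀) x) := by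
          intro x₀
          have hCp : C (x, x₀) = (Fs (x, x₀) - G (x, x₀) - Fst (x, x₀)) / 2 := rfl
          rw [hCp, hFs_app x x₀, hFst_app x x₀, hG_app x x₀]
          have e1 : s x - gradient (fun y => Real.log (k y x₀)) x
              - gradient (fun y => Real.log (w y)) x
              = (s x - gradient (fun y => Real.log (r y)) x)
                + (gradient (fun y => Real.log (q y)) x
                  - gradient (fun y => Real.log (k y x₀)) x) := by
            rw [hglw x]; abel
          have e2 : gradient (fun y => Real.log (r y)) x
              - gradient (fun y => Real.log (k y x₀)) x
              - gradient (fun y => Real.log (w y)) x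
              = gradient (fun y => Real.log (q y)) x
                - gradient (fun y => Real.log (k y x₀)) x := by
            rw [hglw x]; abel
          rw [e1, e2, norm_add_sq_real, hglk x₀ x]
          simp only [inner_sub_right, real_inner_smul_right]
          have hk := hkne x₀ x
          field_simp
          ring
        have hV1 : Integrable (fun x₀ =>
            (pbias x₀ * k x x₀) • gradient (fun y => Real.log (q y)) x) :=
          (hqk_int x).smul_const _
        have hV2 : Integrable (fun x₀ => pbias x₀ • gradient (fun y => k y x₀) x) := by
          refine Integrable.mono'
            (g := fun x₀ => pbias x₀ * k x x₀ * ‖gradient (fun y => Real.log (q y)) x‖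
              + (pbias x₀ * k x x₀) / 2 + Fst (x, x₀) / 2)
            ((((hqk_int x).mul_const _).add ((hqk_int x).div_const 2)).add (hx.div_const 2))
            ((hpbias_meas.smul hgradk_meas).aestronglyMeasurable)
            (ae_of_all _ fun x₀ => ?_)
          beta_reduce
          have hgradk : gradient (fun y => k y x₀) x
              = k x x₀ • gradient (fun y => Real.log (k y x₀)) x := by
            rw [hglk x₀ x, smul_smul, mul_inv_cancel₀ (hkne x₀ x), one_smul]
          have e2 : gradient (fun y => Real.log (r y)) x
              - gradient (fun y => Real.log (k y x₀)) x
              - gradient (fun y => Real.log (w y)) x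
              = gradient (fun y => Real.log (q y)) x
                - gradient (fun y => Real.log (k y x₀)) x := by
            rw [hglw x]; abel
          have hgb : ‖gradient (fun y => Real.log (k y x₀)) x‖
              ≤ ‖gradient (fun y => Real.log (q y)) x‖
                + ‖gradient (fun y => Real.log (q y)) x
                  - gradient (fun y => Real.log (k y x₀)) x‖ := by
            exact norm_le_norm_add_norm_sub _ _
          have hFstval : Fst (x, x₀) = pbias x₀ * k x x₀ *
              ‖gradient (fun y => Real.log (q y)) x
                - gradient (fun y => Real.log (k y x₀)) x‖ ^ 2 := by
            rw [hFst_app x x₀, e2]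
          rw [norm_smul, hgradk, norm_smul, Real.norm_eq_abs, Real.norm_eq_abs,
            abs_of_pos (hpbias_pos x₀), abs_of_pos (hk_pos x₀ x), hFstval]
          have hk0 : (0:ℝ) < pbias x₀ * k x x₀ := mul_pos (hpbias_pos x₀) (hk_pos x₀ x)
          nlinarith [mul_le_mul_of_nonneg_left hgb hk0.le,
            mul_le_mul_of_nonneg_left
              (sq_nonneg (‖gradient (fun y => Real.log (q y)) x
                - gradient (fun y => Real.log (k y x₀)) x‖ - 1)) hk0.le]
        have hVint := hV1.sub hV2
        calc (∫ x₀, C (x, x₀))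
            = ∫ x₀, (inner ℝ (s x - gradient (fun y => Real.log (r y)) x)
              ((pbias x₀ * k x x₀) • gradient (fun y => Real.log (q y)) x
                - pbias x₀ • gradient (fun y => k y x₀) x) : ℝ) :=
              integral_congr_ae (ae_of_all _ hCV)
          _ = inner ℝ (s x - gradient (fun y => Real.log (r y)) x)
              (∫ x₀, ((pbias x₀ * k x x₀) • gradient (fun y => Real.log (q y)) x
                - pbias x₀ • gradient (fun y => k y x₀) x)) :=
              integral_inner hVint _
          _ = 0 := by
              have hIV : (∫ x₀, ((pbias x₀ * k x x₀) • gradient (fun y => Real.log (q y)) x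
                  - pbias x₀ • gradient (fun y => k y x₀) x))
                  = (0 : EuclideanSpace ℝ (Fin d)) := by
                rw [integral_sub hV1 hV2, integral_smul_const, ← hq_def x, ← hq_grad x,
                  hglq x, smul_smul, mul_inv_cancel₀ (hqne x), one_smul, sub_self]
              rw [hIV, inner_zero_right]
      rw [integral_congr_ae hae, integral_zero]
    have hGeq : (∫ p, G p ∂((volume : Measure (EuclideanSpace ℝ (Fin d))).prod volume))
        = ∫ x, q x * ‖s x - gradient (fun y => Real.log (r y)) x‖ ^ 2 := by
      rw [integral_prod G hG_int]
      refine integral_congr_ae (ae_of_all _ fun x => ?_)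
      simp only [hG_app]
      rw [hq_def x]
      exact integral_mul_const _ _
    have hsplit : (∫ p, Fs p ∂((volume : Measure (EuclideanSpace ℝ (Fin d))).prod volume))
        = (∫ p, G p ∂((volume : Measure (EuclideanSpace ℝ (Fin d))).prod volume))
          + 2 * (∫ p, C p ∂((volume : Measure (EuclideanSpace ℝ (Fin d))).prod volume))
          + (∫ p, Fst p ∂((volume : Measure (EuclideanSpace ℝ (Fin d))).prod volume)) := by
      have h1 : (∫ p, Fs p ∂((volume : Measure (EuclideanSpace ℝ (Fin d))).prod volume))
          = ∫ p, (G p + 2 * C p + Fst p)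
              ∂((volume : Measure (EuclideanSpace ℝ (Fin d))).prod volume) :=
        integral_congr_ae (ae_of_all _ fun p => by
          have hCp : C p = (Fs p - G p - Fst p) / 2 := rfl
          beta_reduce
          rw [hCp]; ring)
      have hC2 : Integrable (fun p => 2 * C p)
          ((volume : Measure (EuclideanSpace ℝ (Fin d))).prod volume) := hC_int.const_mul 2
      have hGC : Integrable (fun p => G p + 2 * C p)
          ((volume : Measure (EuclideanSpace ℝ (Fin d))).prod volume) := hG_int.add hC2
      rw [h1, integral_add hGC hFst, integral_add hG_int hC2, integral_const_mul]
    simp only [← hFs_app, ← hFst_app]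
    rw [← integral_prod_symm Fs hFs, ← integral_prod_symm Fst hFst, hsplit, hCzero, hGeq]
    ring
  have hnn : ∀ s : EuclideanSpace ℝ (Fin d) → EuclideanSpace ℝ (Fin d),
      (0:ℝ) ≤ ∫ x, q x * ‖s x - gradient (fun y => Real.log (r y)) x‖ ^ 2 := fun s =>
    integral_nonneg fun x => mul_nonneg (hq_pos x).le (by positivity)
  refine ⟨part1, ?_, ?_, ?_⟩
  · intro s hs hint hqint
    have hk := key s hs hint hqint
    exact ⟨by linarith, by linarith [hnn s]⟩
  · intro s hs hint hqint
    have hk := key s hs hint hqint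
    linarith [hnn s]
  · intro s hs hint hqint hle
    have hk := key s hs hint hqint
    have hz : (∫ x, q x * ‖s x - gradient (fun y => Real.log (r y)) x‖ ^ 2) = 0 :=
      le_antisymm (by linarith) (hnn s)
    have hae := (integral_eq_zero_iff_of_nonneg
      (fun x => mul_nonneg (hq_pos x).le (by positivity)) hqint).mp hz
    filter_upwards [hae] with x hx
    simp only [Pi.zero_apply] at hx
    have h2 : ‖s x - gradient (fun y => Real.log (r y)) x‖ ^ 2 = 0 := by
      rcases mul_eq_zero.mp hx with h | h
      · exact absurd h (hqne x)
      · exact h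
    have h3 : s x - gradient (fun y => Real.log (r y)) x = 0 := by
      rw [pow_eq_zero_iff (two_ne_zero)] at h2
      exact norm_eq_zero.mp h2
    exact sub_eq_zero.mp h3
end

section
/- Reweighting-only objective converges to the biased score (Appendix A.5, equations 42–43). Let k be a transition kernel, let q and r be the perturbed marginals of the strictly positive probability densities p_bias and p_data under k, and let w := r/q. Define J(s) := (1/2)∫∫ p_bias(x₀) k(x,x₀) w(x) ‖s(x) − ∇ log k(x,x₀)‖² dx dx₀ for measurable vector fields s : ℝ^d → ℝ^d with all integrals finite. Then there is a constant C, not depending on s, such that J(s) = (1/2)∫ q(x) w(x) ‖s(x) − ∇ log q(x)‖² dx + C for all admissible s; consequently s*(x) := ∇ log q(x) (the score of the perturbed biased distribution, not of the unbiased one) minimizes J, and any minimizer agrees with ∇ log q Lebesgue-almost everywhere. -/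
open MeasureTheory

/-! For fixed `x`, the weights `p_bias(x₀) k(x, x₀)` have total mass `q(x)`, and since
`∇k = k ∇log k` their mean of the kernel scores `∇log k(x, ·)` is `∇q(x) / q(x) = ∇log q(x)`.
The bias–variance decomposition therefore splits the inner integral of `J(s)` into
`q(x) w(x) ‖s(x) - ∇log q(x)‖²` plus a term that does not involve `s`; Fubini turns this into
`J(s) = ½∫ q w ‖s - ∇log q‖² + J(∇log q)`, and as `q w > 0` the gap vanishes only when
`s = ∇log q` almost everywhere. -/

open scoped RealInnerProductSpace

section WeightedVariance

variable {α E : Type*} [MeasurableSpace α] {ν : Measure α}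
  [NormedAddCommGroup E]

lemma ae_eq_of_integral_mul_norm_sub_sq_eq_zero {c : α → ℝ} {f g : α → E}
    (hc : ∀ a, 0 < c a) (hint : Integrable (fun a => c a * ‖f a - g a‖ ^ 2) ν)
    (hzero : ∫ a, c a * ‖f a - g a‖ ^ 2 ∂ν = 0) : f =ᵐ[ν] g := by
  have hnonneg : 0 ≤ fun a => c a * ‖f a - g a‖ ^ 2 := fun a => by
    have := hc a; positivity
  filter_upwards [(integral_eq_zero_iff_of_nonneg hnonneg hint).1 hzero] with a ha
  simpa [sub_eq_zero, (hc a).ne'] using ha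

variable [InnerProductSpace ℝ E] {u : α → ℝ} {v : α → E} {m : E}

lemma integrable_smul_of_integrable_mul_norm_sub_sq (hu : Integrable u ν)
    (huv : AEStronglyMeasurable (fun a => u a • v a) ν)
    (hvar : Integrable (fun a => u a * ‖m - v a‖ ^ 2) ν) :
    Integrable (fun a => u a • v a) ν := by
  refine ((hu.abs.mul_const (‖m‖ + 1)).add hvar.abs).mono' huv (.of_forall fun a => ?_)
  have hv : ‖v a‖ ≤ ‖m‖ + ‖m - v a‖ := norm_le_norm_add_norm_sub m (v a)
  have hsq : ‖m - v a‖ ≤ 1 + ‖m - v a‖ ^ 2 := by nlinarith [sq_nonneg (‖m - v a‖ - 1)]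
  calc ‖u a • v a‖ = |u a| * ‖v a‖ := by rw [norm_smul, Real.norm_eq_abs]
    _ ≤ |u a| * (‖m‖ + 1 + ‖m - v a‖ ^ 2) := by gcongr; linarith
    _ = |u a| * (‖m‖ + 1) + |u a * ‖m - v a‖ ^ 2| := by
      rw [abs_mul, abs_of_nonneg (sq_nonneg ‖m - v a‖)]; ring

/-- Bias–variance decomposition around the `u`-weighted mean `m` of `v`. -/
lemma integral_mul_norm_sub_sq_eq_add [CompleteSpace E] (hu : Integrable u ν)
    (huv : AEStronglyMeasurable (fun a => u a • v a) ν)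
    (hvar : Integrable (fun a => u a * ‖m - v a‖ ^ 2) ν)
    (hmean : ∫ a, u a • v a ∂ν = (∫ a, u a ∂ν) • m) (c : E) :
    ∫ a, u a * ‖c - v a‖ ^ 2 ∂ν
      = (∫ a, u a ∂ν) * ‖c - m‖ ^ 2 + ∫ a, u a * ‖m - v a‖ ^ 2 ∂ν := by
  have huv_int := integrable_smul_of_integrable_mul_norm_sub_sq hu huv hvar
  have hcentered : Integrable (fun a => u a • m - u a • v a) ν := (hu.smul_const m).sub huv_int
  have hexpand : ∀ a, u a * ‖c - v a‖ ^ 2 = u a * ‖c - m‖ ^ 2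
      + 2 * ⟪c - m, u a • m - u a • v a⟫ + u a * ‖m - v a‖ ^ 2 := fun a => by
    rw [← smul_sub, inner_smul_right, show c - v a = (c - m) + (m - v a) by abel,
      norm_add_sq_real]
    ring
  have hcross : ∫ a, ⟪c - m, u a • m - u a • v a⟫ ∂ν = 0 := by
    rw [integral_inner hcentered, integral_sub (hu.smul_const m) huv_int, integral_smul_const,
      hmean, sub_self, inner_zero_right]
  have hcross_int : Integrable (fun a => 2 * ⟪c - m, u a • m - u a • v a⟫) ν :=
    (hcentered.const_inner _).const_mul 2
  have hfirst : Integrable (fun a => u a * ‖c - m‖ ^ 2 + 2 * ⟪c - m, u a • m - u a • v a⟫) ν :=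
    (hu.mul_const _).add hcross_int
  simp_rw [hexpand]
  rw [integral_add hfirst hvar, integral_add (hu.mul_const _) hcross_int, integral_mul_const,
    integral_const_mul, hcross, mul_zero, add_zero]

end WeightedVariance

section ScoreMatching

variable {α E : Type*} [MeasurableSpace α] [NormedAddCommGroup E] [InnerProductSpace ℝ E]

lemma smul_gradient_log [CompleteSpace E] {f : E → ℝ} {x : E} (hf : DifferentiableAt ℝ f x)
    (hfx : f x ≠ 0) : f x • gradient (fun y => Real.log (f y)) x = gradient f x := by
  rw [gradient, fderiv.log hf hfx, gradient, map_smul, smul_smul, mul_inv_cancel₀ hfx, one_smul]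

lemma measurable_fderiv_apply_of_measurable_uncurry [MeasurableSpace E] {f : E → α → ℝ}
    (hf : Measurable (Function.uncurry f)) {x : E}
    (hdiff : ∀ a, DifferentiableAt ℝ (fun y => f y a) x) (v : E) :
    Measurable fun a => fderiv ℝ (fun y => f y a) x v :=
  measurable_of_tendsto_metrizable
    (f := fun (n : ℕ) a => (n : ℝ) • (f (x + (n : ℝ)⁻¹ • v) a - f x a))
    (fun _ => ((hf.comp measurable_prodMk_left).sub (hf.comp measurable_prodMk_left)).const_mul _)
    (tendsto_pi_nhds.2 fun a =>
      ((hdiff a).hasFDerivAt.lim_real v).comp (tendsto_natCast_atTop_atTop (R := ℝ)))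

lemma measurable_gradient_of_measurable_uncurry [FiniteDimensional ℝ E] [MeasurableSpace E]
    [BorelSpace E] {f : E → α → ℝ} (hf : Measurable (Function.uncurry f)) {x : E}
    (hdiff : ∀ a, DifferentiableAt ℝ (fun y => f y a) x) :
    Measurable fun a => gradient (fun y => f y a) x := by
  let b := stdOrthonormalBasis ℝ E
  have hsum : ∀ a, gradient (fun y => f y a) x = ∑ i, fderiv ℝ (fun y => f y a) x (b i) • b i :=
    fun a => by
      conv_lhs => rw [← b.sum_repr' (gradient _ x)]
      simp only [real_inner_comm, inner_gradient_left]
  simp_rw [hsum]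
  exact Finset.measurable_sum _ fun i _ =>
    (measurable_fderiv_apply_of_measurable_uncurry hf hdiff _).smul_const _

variable [FiniteDimensional ℝ E] [MeasurableSpace E] [BorelSpace E] {ν : Measure α}
  {p : α → ℝ} {k : E → α → ℝ} {q : E → ℝ}

lemma integral_mul_norm_sub_gradient_log_kernel_eq_add {x : E} (hp : Measurable p)
    (hk : Measurable (Function.uncurry k)) (hk_ne : ∀ x₀, k x x₀ ≠ 0)
    (hk_diff : ∀ x₀, DifferentiableAt ℝ (fun y => k y x₀) x)
    (hq : q x = ∫ x₀, p x₀ * k x x₀ ∂ν) (hq_ne : q x ≠ 0) (hq_diff : DifferentiableAt ℝ q x)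
    (hq_grad : gradient q x = ∫ x₀, p x₀ • gradient (fun y => k y x₀) x ∂ν) (t : ℝ) (c : E)
    (hvar : Integrable (fun x₀ => p x₀ * k x x₀ * t *
      ‖gradient (fun y => Real.log (q y)) x - gradient (fun y => Real.log (k y x₀)) x‖ ^ 2) ν) :
    ∫ x₀, p x₀ * k x x₀ * t * ‖c - gradient (fun y => Real.log (k y x₀)) x‖ ^ 2 ∂ν
      = q x * t * ‖c - gradient (fun y => Real.log (q y)) x‖ ^ 2
        + ∫ x₀, p x₀ * k x x₀ * t *
          ‖gradient (fun y => Real.log (q y)) x - gradient (fun y => Real.log (k y x₀)) x‖ ^ 2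
          ∂ν := by
  have hu : Integrable (fun x₀ => p x₀ * k x x₀) ν := Integrable.of_integral_ne_zero (hq ▸ hq_ne)
  have hmass : ∫ x₀, p x₀ * k x x₀ * t ∂ν = q x * t := by rw [integral_mul_const, hq]
  have hscore : ∀ x₀, (p x₀ * k x x₀ * t) • gradient (fun y => Real.log (k y x₀)) x
      = t • p x₀ • gradient (fun y => k y x₀) x := fun x₀ => by
    rw [← smul_gradient_log (hk_diff x₀) (hk_ne x₀), smul_smul, smul_smul]
    ring_nf
  have hmeas : AEStronglyMeasurable
      (fun x₀ => (p x₀ * k x x₀ * t) • gradient (fun y => Real.log (k y x₀)) x) ν := by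
    simp_rw [hscore]
    exact ((hp.smul (measurable_gradient_of_measurable_uncurry hk hk_diff)).const_smul
      t).aestronglyMeasurable
  have hmean : ∫ x₀, (p x₀ * k x x₀ * t) • gradient (fun y => Real.log (k y x₀)) x ∂ν
      = (∫ x₀, p x₀ * k x x₀ * t ∂ν) • gradient (fun y => Real.log (q y)) x := by
    simp_rw [hscore]
    rw [integral_smul, ← hq_grad, ← smul_gradient_log hq_diff hq_ne, hmass, smul_smul, mul_comm]
  rw [integral_mul_norm_sub_sq_eq_add (hu.mul_const t) hmeas hvar hmean c, hmass]

/-- Twice the objective `J(s)` of the paper. -/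
noncomputable def reweightedScoreMatchingLoss (μ : Measure E) (ν : Measure α) (p : α → ℝ)
    (k : E → α → ℝ) (w : E → ℝ) (s : E → E) : ℝ :=
  ∫ x₀, ∫ x, p x₀ * k x x₀ * w x * ‖s x - gradient (fun y => Real.log (k y x₀)) x‖ ^ 2 ∂μ ∂ν

lemma reweightedScoreMatchingLoss_eq_add {μ : Measure E} [SigmaFinite μ] [SigmaFinite ν]
    {w : E → ℝ} {s : E → E} (hp : Measurable p) (hk : Measurable (Function.uncurry k))
    (hk_ne : ∀ x x₀, k x x₀ ≠ 0) (hk_diff : ∀ x₀, Differentiable ℝ fun y => k y x₀)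
    (hq : ∀ x, q x = ∫ x₀, p x₀ * k x x₀ ∂ν) (hq_ne : ∀ x, q x ≠ 0) (hq_diff : Differentiable ℝ q)
    (hq_grad : ∀ x, gradient q x = ∫ x₀, p x₀ • gradient (fun y => k y x₀) x ∂ν)
    (hstar : Integrable (fun z : E × α => p z.2 * k z.1 z.2 * w z.1 *
      ‖gradient (fun y => Real.log (q y)) z.1 - gradient (fun y => Real.log (k y z.2)) z.1‖ ^ 2)
      (μ.prod ν))
    (hs : Integrable (fun z : E × α => p z.2 * k z.1 z.2 * w z.1 *
      ‖s z.1 - gradient (fun y => Real.log (k y z.2)) z.1‖ ^ 2) (μ.prod ν))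
    (hs' : Integrable (fun x => q x * w x * ‖s x - gradient (fun y => Real.log (q y)) x‖ ^ 2) μ) :
    reweightedScoreMatchingLoss μ ν p k w s
      = ∫ x, q x * w x * ‖s x - gradient (fun y => Real.log (q y)) x‖ ^ 2 ∂μ
        + reweightedScoreMatchingLoss μ ν p k w (gradient fun y => Real.log (q y)) := by
  unfold reweightedScoreMatchingLoss
  rw [← integral_prod_symm _ hs, integral_prod _ hs, ← integral_prod_symm _ hstar,
    integral_prod _ hstar, ← integral_add hs' hstar.integral_prod_left]
  refine integral_congr_ae ?_
  filter_upwards [hstar.prod_right_ae] with x hx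
  exact integral_mul_norm_sub_gradient_log_kernel_eq_add hp hk (hk_ne x)
    (fun x₀ => (hk_diff x₀).differentiableAt) (hq x) (hq_ne x) hq_diff.differentiableAt
    (hq_grad x) (w x) (s x) hx

end ScoreMatching

theorem reweighting_only_objective_general
    {d : ℕ}
    (pbias : EuclideanSpace ℝ (Fin d) → ℝ)
    (hpbias_meas : Measurable pbias)
    (k : EuclideanSpace ℝ (Fin d) → EuclideanSpace ℝ (Fin d) → ℝ)
    (hk_meas : Measurable (Function.uncurry k))
    (hk_pos : ∀ x₀ x, 0 < k x x₀)
    (hk_smooth : ∀ x₀, ContDiff ℝ 1 fun x => k x x₀)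
    (q r : EuclideanSpace ℝ (Fin d) → ℝ)
    (hq_def : ∀ x, q x = ∫ x₀, pbias x₀ * k x x₀)
    (hq_pos : ∀ x, 0 < q x) (hq_diff : Differentiable ℝ q)
    (hq_grad : ∀ x, gradient q x = ∫ x₀, pbias x₀ • gradient (fun y => k y x₀) x)
    (hr_pos : ∀ x, 0 < r x)
    (w : EuclideanSpace ℝ (Fin d) → ℝ)
    (hw_def : ∀ x, w x = r x / q x)
    -- the optimal field s* = ∇ log q is itself admissible
    (hstar_int : Integrable fun p : EuclideanSpace ℝ (Fin d) × EuclideanSpace ℝ (Fin d) =>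
      pbias p.2 * k p.1 p.2 * w p.1 *
        ‖gradient (fun y => Real.log (q y)) p.1
          - gradient (fun y => Real.log (k y p.2)) p.1‖ ^ 2) :
    -- decomposition: J(s) = (1/2)∫ q w ‖s − ∇ log q‖² + C, with C independent of s
    (∃ C : ℝ, ∀ s : EuclideanSpace ℝ (Fin d) → EuclideanSpace ℝ (Fin d),
      Measurable s →
      Integrable (fun p : EuclideanSpace ℝ (Fin d) × EuclideanSpace ℝ (Fin d) =>
        pbias p.2 * k p.1 p.2 * w p.1 *
          ‖s p.1 - gradient (fun y => Real.log (k y p.2)) p.1‖ ^ 2) →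
      Integrable (fun x => q x * w x * ‖s x - gradient (fun y => Real.log (q y)) x‖ ^ 2) →
      (1 / 2) * (∫ x₀, ∫ x, pbias x₀ * k x x₀ * w x *
          ‖s x - gradient (fun y => Real.log (k y x₀)) x‖ ^ 2)
        = (1 / 2) * (∫ x, q x * w x * ‖s x - gradient (fun y => Real.log (q y)) x‖ ^ 2)
          + C)
    ∧
    -- s* = ∇ log q minimizes J among admissible fields
    (∀ s : EuclideanSpace ℝ (Fin d) → EuclideanSpace ℝ (Fin d),
      Measurable s →
      Integrable (fun p : EuclideanSpace ℝ (Fin d) × EuclideanSpace ℝ (Fin d) =>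
        pbias p.2 * k p.1 p.2 * w p.1 *
          ‖s p.1 - gradient (fun y => Real.log (k y p.2)) p.1‖ ^ 2) →
      Integrable (fun x => q x * w x * ‖s x - gradient (fun y => Real.log (q y)) x‖ ^ 2) →
      (1 / 2) * (∫ x₀, ∫ x, pbias x₀ * k x x₀ * w x *
          ‖gradient (fun y => Real.log (q y)) x
            - gradient (fun y => Real.log (k y x₀)) x‖ ^ 2)
        ≤ (1 / 2) * ∫ x₀, ∫ x, pbias x₀ * k x x₀ * w x *
            ‖s x - gradient (fun y => Real.log (k y x₀)) x‖ ^ 2)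
    ∧
    -- any admissible minimizer agrees with ∇ log q Lebesgue-a.e.
    (∀ s : EuclideanSpace ℝ (Fin d) → EuclideanSpace ℝ (Fin d),
      Measurable s →
      Integrable (fun p : EuclideanSpace ℝ (Fin d) × EuclideanSpace ℝ (Fin d) =>
        pbias p.2 * k p.1 p.2 * w p.1 *
          ‖s p.1 - gradient (fun y => Real.log (k y p.2)) p.1‖ ^ 2) →
      Integrable (fun x => q x * w x * ‖s x - gradient (fun y => Real.log (q y)) x‖ ^ 2) →
      (1 / 2) * (∫ x₀, ∫ x, pbias x₀ * k x x₀ * w x *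
          ‖s x - gradient (fun y => Real.log (k y x₀)) x‖ ^ 2)
        ≤ (1 / 2) * (∫ x₀, ∫ x, pbias x₀ * k x x₀ * w x *
            ‖gradient (fun y => Real.log (q y)) x
              - gradient (fun y => Real.log (k y x₀)) x‖ ^ 2) →
      s =ᵐ[volume] fun x => gradient (fun y => Real.log (q y)) x) := by
  have hw_pos : ∀ x, 0 < w x := fun x => hw_def x ▸ div_pos (hr_pos x) (hq_pos x)
  have hdecomp := fun s => reweightedScoreMatchingLoss_eq_add (w := w) (s := s) hpbias_meas
    hk_meas (fun x x₀ => (hk_pos x₀ x).ne') (fun x₀ => (hk_smooth x₀).differentiable one_ne_zero)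
    hq_def (fun x => (hq_pos x).ne') hq_diff hq_grad hstar_int
  unfold reweightedScoreMatchingLoss at hdecomp
  have hgap_nonneg : ∀ s : EuclideanSpace ℝ (Fin d) → EuclideanSpace ℝ (Fin d),
      0 ≤ ∫ x, q x * w x * ‖s x - gradient (fun y => Real.log (q y)) x‖ ^ 2 := fun s =>
    integral_nonneg fun x => by have := hq_pos x; have := hw_pos x; positivity
  refine ⟨⟨(1 / 2) * reweightedScoreMatchingLoss volume volume pbias k w
      (gradient fun y => Real.log (q y)), fun s _ hs hs' => ?_⟩,
    fun s _ hs hs' => ?_, fun s _ hs hs' hmin => ?_⟩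
  · rw [reweightedScoreMatchingLoss, hdecomp s hs hs']
    ring
  · linarith [hdecomp s hs hs', hgap_nonneg s]
  · refine ae_eq_of_integral_mul_norm_sub_sq_eq_zero (c := fun x => q x * w x)
      (fun x => mul_pos (hq_pos x) (hw_pos x)) hs' ?_
    linarith [hdecomp s hs hs', hgap_nonneg s]

/-- **Reweighting-only objective converges to the biased score**
(Appendix A.5, equations 42–43, of "Training Unbiased Diffusion Models From
Biased Dataset").  With
`J(s) := (1/2)∫∫ p_bias(x₀) k(x,x₀) w(x) ‖s(x) − ∇ log k(x,x₀)‖² dx dx₀`,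
there is a constant `C` independent of `s` with
`J(s) = (1/2)∫ q(x) w(x) ‖s(x) − ∇ log q(x)‖² dx + C` for all admissible `s`;
consequently `s* := ∇ log q` (the score of the perturbed *biased* distribution)
minimizes `J`, and any minimizer agrees with `∇ log q` Lebesgue-a.e. -/
theorem reweighting_only_objective
    {d : ℕ} (hd : 1 ≤ d)
    (pbias pdata : EuclideanSpace ℝ (Fin d) → ℝ)
    (hpbias_meas : Measurable pbias) (hpbias_pos : ∀ x₀, 0 < pbias x₀)
    (hpbias_prob : ∫ x₀, pbias x₀ = 1)
    (hpdata_meas : Measurable pdata) (hpdata_pos : ∀ x₀, 0 < pdata x₀)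
    (hpdata_prob : ∫ x₀, pdata x₀ = 1)
    (k : EuclideanSpace ℝ (Fin d) → EuclideanSpace ℝ (Fin d) → ℝ)
    (hk_meas : Measurable (Function.uncurry k))
    (hk_pos : ∀ x₀ x, 0 < k x x₀)
    (hk_prob : ∀ x₀, ∫ x, k x x₀ = 1)
    (hk_smooth : ∀ x₀, ContDiff ℝ 1 fun x => k x x₀)
    (q r : EuclideanSpace ℝ (Fin d) → ℝ)
    (hq_def : ∀ x, q x = ∫ x₀, pbias x₀ * k x x₀)
    (hq_pos : ∀ x, 0 < q x) (hq_diff : Differentiable ℝ q)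
    (hq_grad : ∀ x, gradient q x = ∫ x₀, pbias x₀ • gradient (fun y => k y x₀) x)
    (hr_def : ∀ x, r x = ∫ x₀, pdata x₀ * k x x₀)
    (hr_pos : ∀ x, 0 < r x) (hr_diff : Differentiable ℝ r)
    (hr_grad : ∀ x, gradient r x = ∫ x₀, pdata x₀ • gradient (fun y => k y x₀) x)
    (w : EuclideanSpace ℝ (Fin d) → ℝ)
    (hw_def : ∀ x, w x = r x / q x)
    -- the optimal field s* = ∇ log q is itself admissible
    (hstar_int : Integrable fun p : EuclideanSpace ℝ (Fin d) × EuclideanSpace ℝ (Fin d) =>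
      pbias p.2 * k p.1 p.2 * w p.1 *
        ‖gradient (fun y => Real.log (q y)) p.1
          - gradient (fun y => Real.log (k y p.2)) p.1‖ ^ 2) :
    -- decomposition: J(s) = (1/2)∫ q w ‖s − ∇ log q‖² + C, with C independent of s
    (∃ C : ℝ, ∀ s : EuclideanSpace ℝ (Fin d) → EuclideanSpace ℝ (Fin d),
      Measurable s →
      Integrable (fun p : EuclideanSpace ℝ (Fin d) × EuclideanSpace ℝ (Fin d) =>
        pbias p.2 * k p.1 p.2 * w p.1 *
          ‖s p.1 - gradient (fun y => Real.log (k y p.2)) p.1‖ ^ 2) →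
      Integrable (fun x => q x * w x * ‖s x - gradient (fun y => Real.log (q y)) x‖ ^ 2) →
      (1 / 2) * (∫ x₀, ∫ x, pbias x₀ * k x x₀ * w x *
          ‖s x - gradient (fun y => Real.log (k y x₀)) x‖ ^ 2)
        = (1 / 2) * (∫ x, q x * w x * ‖s x - gradient (fun y => Real.log (q y)) x‖ ^ 2)
          + C)
    ∧
    -- s* = ∇ log q minimizes J among admissible fields
    (∀ s : EuclideanSpace ℝ (Fin d) → EuclideanSpace ℝ (Fin d),
      Measurable s →
      Integrable (fun p : EuclideanSpace ℝ (Fin d) × EuclideanSpace ℝ (Fin d) =>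
        pbias p.2 * k p.1 p.2 * w p.1 *
          ‖s p.1 - gradient (fun y => Real.log (k y p.2)) p.1‖ ^ 2) →
      Integrable (fun x => q x * w x * ‖s x - gradient (fun y => Real.log (q y)) x‖ ^ 2) →
      (1 / 2) * (∫ x₀, ∫ x, pbias x₀ * k x x₀ * w x *
          ‖gradient (fun y => Real.log (q y)) x
            - gradient (fun y => Real.log (k y x₀)) x‖ ^ 2)
        ≤ (1 / 2) * ∫ x₀, ∫ x, pbias x₀ * k x x₀ * w x *
            ‖s x - gradient (fun y => Real.log (k y x₀)) x‖ ^ 2)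
    ∧
    -- any admissible minimizer agrees with ∇ log q Lebesgue-a.e.
    (∀ s : EuclideanSpace ℝ (Fin d) → EuclideanSpace ℝ (Fin d),
      Measurable s →
      Integrable (fun p : EuclideanSpace ℝ (Fin d) × EuclideanSpace ℝ (Fin d) =>
        pbias p.2 * k p.1 p.2 * w p.1 *
          ‖s p.1 - gradient (fun y => Real.log (k y p.2)) p.1‖ ^ 2) →
      Integrable (fun x => q x * w x * ‖s x - gradient (fun y => Real.log (q y)) x‖ ^ 2) →
      (1 / 2) * (∫ x₀, ∫ x, pbias x₀ * k x x₀ * w x *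
          ‖s x - gradient (fun y => Real.log (k y x₀)) x‖ ^ 2)
        ≤ (1 / 2) * (∫ x₀, ∫ x, pbias x₀ * k x x₀ * w x *
            ‖gradient (fun y => Real.log (q y)) x
              - gradient (fun y => Real.log (k y x₀)) x‖ ^ 2) →
      s =ᵐ[volume] fun x => gradient (fun y => Real.log (q y)) x) :=
  reweighting_only_objective_general pbias hpbias_meas k hk_meas hk_pos hk_smooth q r hq_def hq_pos
    hq_diff hq_grad hr_pos w hw_def hstar_int
end

section
/- Equivalence of time-independent and time-dependent importance reweighting objectives (Appendix A.4). Define, for a measurable time-dependent vector field s : ℝ^d × (0,T] → ℝ^d, the time-independent importance-reweighted objective L_IW-DSM(s) := (1/2)∫₀ᵀ λ(t) ∫∫ p_bias(x₀) w₀(x₀) k_t(x,x₀) ‖s(x,t) − ∇ log k_t(x,x₀)‖² dx dx₀ dt, where w₀ := p_data/p_bias, and the time-dependent importance-reweighted objective L_TIW-DSM(s) := (1/2)∫₀ᵀ λ(t) ∫∫ p_bias(x₀) k_t(x,x₀) w_t(x) ‖s(x,t) − ∇ log k_t(x,x₀) − ∇ log w_t(x)‖² dx dx₀ dt, where w_t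 := r_t/q_t. Then for every pair of admissible vector fields s₁, s₂ (all integrals finite), L_IW-DSM(s₁) − L_IW-DSM(s₂) = L_TIW-DSM(s₁) − L_TIW-DSM(s₂); i.e., the two objectives differ by a constant that does not depend on the vector field, and in particular they share the same minimizers. -/
open MeasureTheory
open scoped RealInnerProductSpace

section Helpers

/-- difference of squared norms. -/
lemma iwdsm_norm_sq_sub {F : Type*} [NormedAddCommGroup F] [InnerProductSpace ℝ F]
    (a b : F) : ‖a‖ ^ 2 - ‖b‖ ^ 2 = ⟪a - b, a + b⟫ := by
  rw [inner_sub_left, inner_add_right, inner_add_right,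
    real_inner_self_eq_norm_sq, real_inner_self_eq_norm_sq, real_inner_comm b a]
  ring

/-- gradient of a logarithm. -/
lemma iwdsm_gradient_log {F : Type*} [NormedAddCommGroup F] [InnerProductSpace ℝ F]
    [CompleteSpace F] {f : F → ℝ} {x : F} (hf : DifferentiableAt ℝ f x) (hx : f x ≠ 0) :
    gradient (fun y => Real.log (f y)) x = (f x)⁻¹ • gradient f x := by
  have h := (hf.hasFDerivAt).log hx
  unfold gradient
  rw [h.fderiv]
  exact _root_.map_smul _ _ _

/-- gradient of a difference. -/
lemma iwdsm_gradient_sub {F : Type*} [NormedAddCommGroup F] [InnerProductSpace ℝ F]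
    [CompleteSpace F] {f g : F → ℝ} {x : F} (hf : DifferentiableAt ℝ f x)
    (hg : DifferentiableAt ℝ g x) :
    gradient (fun y => f y - g y) x = gradient f x - gradient g x := by
  have h := (hf.hasFDerivAt).sub (hg.hasFDerivAt)
  unfold gradient
  rw [show (fun y => f y - g y) = f - g from rfl, h.fderiv]
  exact _root_.map_sub _ _ _

/-- measurability, in the second variable, of a directional derivative in the first variable. -/
lemma iwdsm_measurable_fderiv_app {d : ℕ}
    (k : EuclideanSpace ℝ (Fin d) → EuclideanSpace ℝ (Fin d) → ℝ)
    (hk : Measurable (Function.uncurry k))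
    (hdiff : ∀ x₀, Differentiable ℝ fun y => k y x₀) (x v : EuclideanSpace ℝ (Fin d)) :
    Measurable fun x₀ => fderiv ℝ (fun y => k y x₀) x v := by
  have hap : ∀ y : EuclideanSpace ℝ (Fin d), Measurable fun x₀ => k y x₀ := by
    intro y
    exact hk.comp measurable_prodMk_left
  have hseqm : ∀ n : ℕ, Measurable fun x₀ =>
      ((n : ℝ) + 1) * (k (x + ((n : ℝ) + 1)⁻¹ • v) x₀ - k x x₀) :=
    fun n => measurable_const.mul ((hap _).sub (hap _))
  apply measurable_of_tendsto_metrizable hseqm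
  rw [tendsto_pi_nhds]
  intro x₀
  have hline : HasDerivAt (fun s : ℝ => k (x + s • v) x₀)
      (fderiv ℝ (fun y => k y x₀) x v) 0 := by
    have h1 : HasDerivAt (fun s : ℝ => x + s • v) v 0 := by
      simpa using ((hasDerivAt_id (0 : ℝ)).smul_const v).const_add x
    have h2 : HasFDerivAt (fun y => k y x₀) (fderiv ℝ (fun y => k y x₀) x)
        ((fun s : ℝ => x + s • v) 0) := by
      simpa using (hdiff x₀ x).hasFDerivAt
    exact h2.comp_hasDerivAt 0 h1
  have hslope := hasDerivAt_iff_tendsto_slope.mp hline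
  have hseq : Filter.Tendsto (fun n : ℕ => ((n : ℝ) + 1)⁻¹) Filter.atTop
      (nhdsWithin 0 {(0 : ℝ)}ᶜ) := by
    apply tendsto_nhdsWithin_of_tendsto_nhds_of_eventually_within
    · simpa [one_div] using tendsto_one_div_add_atTop_nhds_zero_nat (𝕜 := ℝ)
    · filter_upwards with n
      simp only [Set.mem_compl_iff, Set.mem_singleton_iff]
      positivity
  have hcomp := hslope.comp hseq
  refine hcomp.congr fun n => ?_
  simp only [Function.comp_apply, slope_def_field, zero_smul, add_zero, sub_zero]
  rw [div_eq_mul_inv, inv_inv]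
  ring

/-- measurability, in the second variable, of the gradient in the first variable. -/
lemma iwdsm_measurable_gradient_slice {d : ℕ}
    (k : EuclideanSpace ℝ (Fin d) → EuclideanSpace ℝ (Fin d) → ℝ)
    (hk : Measurable (Function.uncurry k))
    (hdiff : ∀ x₀, Differentiable ℝ fun y => k y x₀) (x : EuclideanSpace ℝ (Fin d)) :
    Measurable fun x₀ => gradient (fun y => k y x₀) x := by
  have key : Measurable fun x₀ =>
      (MeasurableEquiv.toLp 2 (Fin d → ℝ)).symm (gradient (fun y => k y x₀) x) := by
    apply measurable_pi_iff.mpr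
    intro i
    have hco : (fun x₀ =>
        (MeasurableEquiv.toLp 2 (Fin d → ℝ)).symm (gradient (fun y => k y x₀) x) i)
        = fun x₀ => fderiv ℝ (fun y => k y x₀) x (EuclideanSpace.single i (1 : ℝ)) := by
      funext x₀
      have h2 : ⟪gradient (fun y => k y x₀) x, EuclideanSpace.single i (1 : ℝ)⟫
          = gradient (fun y => k y x₀) x i := by
        rw [EuclideanSpace.inner_single_right]
        simp
      have ht := InnerProductSpace.toDual_symm_apply (𝕜 := ℝ)
        (E := EuclideanSpace ℝ (Fin d)) (y := fderiv ℝ (fun y => k y x₀) x)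
        (x := EuclideanSpace.single i (1 : ℝ))
      calc (MeasurableEquiv.toLp 2 (Fin d → ℝ)).symm (gradient (fun y => k y x₀) x) i
          = gradient (fun y => k y x₀) x i := rfl
        _ = ⟪gradient (fun y => k y x₀) x, EuclideanSpace.single i (1 : ℝ)⟫ := h2.symm
        _ = fderiv ℝ (fun y => k y x₀) x (EuclideanSpace.single i (1 : ℝ)) := ht
    rw [hco]
    exact iwdsm_measurable_fderiv_app k hk hdiff x _
  have key2 := ((MeasurableEquiv.toLp 2 (Fin d → ℝ)).symm.symm.measurable).comp key
  exact key2

/-- integrability of a density times a gradient, from the DSM-type integrability. -/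
lemma iwdsm_integrable_density_grad {d : ℕ}
    (ρ K : EuclideanSpace ℝ (Fin d) → ℝ) (G : EuclideanSpace ℝ (Fin d) → EuclideanSpace ℝ (Fin d))
    (c : EuclideanSpace ℝ (Fin d))
    (hρ : ∀ a, 0 ≤ ρ a) (hK : ∀ a, 0 < K a)
    (hmeas : AEStronglyMeasurable (fun a => ρ a • G a) volume)
    (hIρK : Integrable fun a => ρ a * K a)
    (hint : Integrable fun a => ρ a * K a * ‖c - (K a)⁻¹ • G a‖ ^ 2) :
    Integrable fun a => ρ a • G a := by
  refine Integrable.mono' ((hint.const_mul (1/2)).add (hIρK.const_mul (1/2 + ‖c‖))) hmeas ?_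
  filter_upwards with a
  have hGa : G a = K a • c - K a • (c - (K a)⁻¹ • G a) := by
    rw [smul_sub, smul_inv_smul₀ (hK a).ne']
    abel
  have htri : ‖G a‖ ≤ K a * ‖c‖ + K a * ‖c - (K a)⁻¹ • G a‖ := by
    have h5 : ‖G a‖ ≤ ‖K a • c‖ + ‖K a • (c - (K a)⁻¹ • G a)‖ := by
      conv_lhs => rw [hGa]
      exact norm_sub_le _ _
    simp only [norm_smul, Real.norm_of_nonneg (hK a).le] at h5
    exact h5
  have hnorm : ‖ρ a • G a‖ = ρ a * ‖G a‖ := by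
    rw [norm_smul, Real.norm_of_nonneg (hρ a)]
  simp only [Pi.add_apply]
  rw [hnorm]
  have hm0 : (0:ℝ) ≤ ‖c - (K a)⁻¹ • G a‖ := norm_nonneg _
  have hsq : (0:ℝ) ≤ (‖c - (K a)⁻¹ • G a‖ - 1) ^ 2 := sq_nonneg _
  have h1 := hρ a
  have h2 := (hK a).le
  have h3 : ρ a * ‖G a‖ ≤ ρ a * (K a * ‖c‖ + K a * ‖c - (K a)⁻¹ • G a‖) :=
    mul_le_mul_of_nonneg_left htri h1
  nlinarith [mul_nonneg (mul_nonneg h1 h2) hsq]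

end Helpers

/-- The key pointwise-in-`x` identity. -/
lemma iwdsm_core_x {d : ℕ}
    (pbias pdata w₀ : EuclideanSpace ℝ (Fin d) → ℝ)
    (hpbias_meas : Measurable pbias) (hpdata_meas : Measurable pdata)
    (hpbias_pos : ∀ a, 0 < pbias a) (hpdata_pos : ∀ a, 0 < pdata a)
    (hw₀ : ∀ a, pbias a * w₀ a = pdata a)
    (k : EuclideanSpace ℝ (Fin d) → EuclideanSpace ℝ (Fin d) → ℝ)
    (hk_meas : Measurable (Function.uncurry k))
    (hk_pos : ∀ x₀ x, 0 < k x x₀)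
    (hk_smooth : ∀ x₀, ContDiff ℝ 1 fun x => k x x₀)
    (q r w : EuclideanSpace ℝ (Fin d) → ℝ)
    (hq_pos : ∀ y, 0 < q y) (hr_pos : ∀ y, 0 < r y)
    (hw_def : ∀ y, w y = r y / q y)
    (x : EuclideanSpace ℝ (Fin d))
    (hq_def : q x = ∫ x₀, pbias x₀ * k x x₀)
    (hr_def : r x = ∫ x₀, pdata x₀ * k x x₀)
    (hq_diff : DifferentiableAt ℝ q x) (hr_diff : DifferentiableAt ℝ r x)
    (hq_grad : gradient q x = ∫ x₀, pbias x₀ • gradient (fun y => k y x₀) x)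
    (hr_grad : gradient r x = ∫ x₀, pdata x₀ • gradient (fun y => k y x₀) x)
    (s₁x s₂x : EuclideanSpace ℝ (Fin d))
    (h1 : Integrable fun x₀ => pbias x₀ * w₀ x₀ * k x x₀ *
      ‖s₁x - gradient (fun y => Real.log (k y x₀)) x‖ ^ 2)
    (h2 : Integrable fun x₀ => pbias x₀ * w₀ x₀ * k x x₀ *
      ‖s₂x - gradient (fun y => Real.log (k y x₀)) x‖ ^ 2)
    (h3 : Integrable fun x₀ => pbias x₀ * k x x₀ * w x *
      ‖s₁x - gradient (fun y => Real.log (k y x₀)) x - gradient (fun y => Real.log (w y)) x‖ ^ 2)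
    (h4 : Integrable fun x₀ => pbias x₀ * k x x₀ * w x *
      ‖s₂x - gradient (fun y => Real.log (k y x₀)) x - gradient (fun y => Real.log (w y)) x‖ ^ 2) :
    (∫ x₀, pbias x₀ * w₀ x₀ * k x x₀ * ‖s₁x - gradient (fun y => Real.log (k y x₀)) x‖ ^ 2)
      - ∫ x₀, pbias x₀ * w₀ x₀ * k x x₀ * ‖s₂x - gradient (fun y => Real.log (k y x₀)) x‖ ^ 2
    = (∫ x₀, pbias x₀ * k x x₀ * w x *
        ‖s₁x - gradient (fun y => Real.log (k y x₀)) x - gradient (fun y => Real.log (w y)) x‖ ^ 2)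
      - ∫ x₀, pbias x₀ * k x x₀ * w x *
        ‖s₂x - gradient (fun y => Real.log (k y x₀)) x - gradient (fun y => Real.log (w y)) x‖ ^ 2 := by
  have hkdiff : ∀ x₀, Differentiable ℝ fun y => k y x₀ :=
    fun x₀ => (hk_smooth x₀).differentiable one_ne_zero
  have hglog : ∀ x₀ : EuclideanSpace ℝ (Fin d),
      gradient (fun y => Real.log (k y x₀)) x
        = (k x x₀)⁻¹ • gradient (fun y => k y x₀) x :=
    fun x₀ => iwdsm_gradient_log (hkdiff x₀ x) (hk_pos x₀ x).ne'
  have hwx_pos : 0 < w x := by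
    rw [hw_def x]; exact div_pos (hr_pos x) (hq_pos x)
  -- the gradient of `log w` at `x`
  have hHw : gradient (fun y => Real.log (w y)) x
      = (r x)⁻¹ • gradient r x - (q x)⁻¹ • gradient q x := by
    have hfun : (fun y => Real.log (w y)) = fun y => Real.log (r y) - Real.log (q y) := by
      funext y
      rw [hw_def y, Real.log_div (hr_pos y).ne' (hq_pos y).ne']
    rw [hfun,
      iwdsm_gradient_sub (hr_diff.log (hr_pos x).ne') (hq_diff.log (hq_pos x).ne'),
      iwdsm_gradient_log hr_diff (hr_pos x).ne', iwdsm_gradient_log hq_diff (hq_pos x).ne']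
  set Hv : EuclideanSpace ℝ (Fin d) := gradient (fun y => Real.log (w y)) x with hHv
  -- rewrite all integrands in raw form
  simp only [hw₀, hglog] at h1 h2 h3 h4 ⊢
  -- base integrabilities
  have hIbk : Integrable fun x₀ => pbias x₀ * k x x₀ := by
    by_contra hcon
    rw [integral_undef hcon] at hq_def
    exact absurd hq_def (hq_pos x).ne'
  have hIdk : Integrable fun x₀ => pdata x₀ * k x x₀ := by
    by_contra hcon
    rw [integral_undef hcon] at hr_def
    exact absurd hr_def (hr_pos x).ne'
  have hGmeas : Measurable fun x₀ => gradient (fun y => k y x₀) x :=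
    iwdsm_measurable_gradient_slice k hk_meas hkdiff x
  have hdGmeas : AEStronglyMeasurable
      (fun x₀ => pdata x₀ • gradient (fun y => k y x₀) x) volume :=
    (hpdata_meas.smul hGmeas).aestronglyMeasurable
  have hbGmeas : AEStronglyMeasurable
      (fun x₀ => pbias x₀ • gradient (fun y => k y x₀) x) volume :=
    (hpbias_meas.smul hGmeas).aestronglyMeasurable
  have hIdG : Integrable fun x₀ => pdata x₀ • gradient (fun y => k y x₀) x :=
    iwdsm_integrable_density_grad pdata (fun x₀ => k x x₀)
      (fun x₀ => gradient (fun y => k y x₀) x) s₁x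
      (fun a => (hpdata_pos a).le) (fun a => hk_pos a x) hdGmeas hIdk h1
  -- transform `h3` into the shape needed for `iwdsm_integrable_density_grad`
  have h3' : Integrable fun x₀ => pbias x₀ * k x x₀ *
      ‖(s₁x - Hv) - (k x x₀)⁻¹ • gradient (fun y => k y x₀) x‖ ^ 2 := by
    have heq : (fun x₀ => (w x)⁻¹ * (pbias x₀ * k x x₀ * w x *
        ‖s₁x - (k x x₀)⁻¹ • gradient (fun y => k y x₀) x - Hv‖ ^ 2))
        = fun x₀ => pbias x₀ * k x x₀ *
          ‖(s₁x - Hv) - (k x x₀)⁻¹ • gradient (fun y => k y x₀) x‖ ^ 2 := by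
      funext a
      rw [sub_right_comm]
      field_simp
    exact heq ▸ h3.const_mul (w x)⁻¹
  have hIbG : Integrable fun x₀ => pbias x₀ • gradient (fun y => k y x₀) x :=
    iwdsm_integrable_density_grad pbias (fun x₀ => k x x₀)
      (fun x₀ => gradient (fun y => k y x₀) x) (s₁x - Hv)
      (fun a => (hpbias_pos a).le) (fun a => hk_pos a x) hbGmeas hIbk h3'
  set u : EuclideanSpace ℝ (Fin d) := s₁x - s₂x with hu
  set σ : EuclideanSpace ℝ (Fin d) := s₁x + s₂x with hσ
  -- the data-side computation
  have key1 : (∫ x₀, pdata x₀ * k x x₀ *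
        ‖s₁x - (k x x₀)⁻¹ • gradient (fun y => k y x₀) x‖ ^ 2)
      - ∫ x₀, pdata x₀ * k x x₀ *
        ‖s₂x - (k x x₀)⁻¹ • gradient (fun y => k y x₀) x‖ ^ 2
      = ⟪u, σ⟫ * r x - 2 * ⟪u, gradient r x⟫ := by
    rw [← integral_sub h1 h2]
    have hfe : (fun x₀ => pdata x₀ * k x x₀ *
          ‖s₁x - (k x x₀)⁻¹ • gradient (fun y => k y x₀) x‖ ^ 2
        - pdata x₀ * k x x₀ *
          ‖s₂x - (k x x₀)⁻¹ • gradient (fun y => k y x₀) x‖ ^ 2)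
        = fun x₀ => ⟪u, σ⟫ * (pdata x₀ * k x x₀)
          - 2 * ⟪u, pdata x₀ • gradient (fun y => k y x₀) x⟫ := by
      funext a
      have hk0 : k x a ≠ 0 := (hk_pos a x).ne'
      have e1 : ‖s₁x - (k x a)⁻¹ • gradient (fun y => k y a) x‖ ^ 2
          - ‖s₂x - (k x a)⁻¹ • gradient (fun y => k y a) x‖ ^ 2
          = ⟪u, σ⟫ - 2 * ((k x a)⁻¹ * ⟪u, gradient (fun y => k y a) x⟫) := by
        rw [iwdsm_norm_sq_sub, sub_sub_sub_cancel_right, hu, hσ]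
        simp only [inner_add_right, inner_sub_right, real_inner_smul_right]
        ring
      have e2 : ⟪u, pdata a • gradient (fun y => k y a) x⟫
          = pdata a * ⟪u, gradient (fun y => k y a) x⟫ := real_inner_smul_right _ _ _
      calc pdata a * k x a * ‖s₁x - (k x a)⁻¹ • gradient (fun y => k y a) x‖ ^ 2
            - pdata a * k x a * ‖s₂x - (k x a)⁻¹ • gradient (fun y => k y a) x‖ ^ 2
          = pdata a * k x a * ((‖s₁x - (k x a)⁻¹ • gradient (fun y => k y a) x‖ ^ 2)
            - ‖s₂x - (k x a)⁻¹ • gradient (fun y => k y a) x‖ ^ 2) := by ring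
        _ = pdata a * k x a *
            (⟪u, σ⟫ - 2 * ((k x a)⁻¹ * ⟪u, gradient (fun y => k y a) x⟫)) := by rw [e1]
        _ = ⟪u, σ⟫ * (pdata a * k x a)
            - 2 * (pdata a * ⟪u, gradient (fun y => k y a) x⟫) := by
            field_simp
        _ = ⟪u, σ⟫ * (pdata a * k x a)
            - 2 * ⟪u, pdata a • gradient (fun y => k y a) x⟫ := by rw [e2]
    rw [hfe, integral_sub (hIdk.const_mul _) ((hIdG.const_inner u).const_mul 2),
      integral_const_mul, integral_const_mul, integral_inner hIdG, ← hr_def, ← hr_grad]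
  -- the model-side computation
  have key2 : (∫ x₀, pbias x₀ * k x x₀ * w x *
        ‖s₁x - (k x x₀)⁻¹ • gradient (fun y => k y x₀) x - Hv‖ ^ 2)
      - ∫ x₀, pbias x₀ * k x x₀ * w x *
        ‖s₂x - (k x x₀)⁻¹ • gradient (fun y => k y x₀) x - Hv‖ ^ 2
      = ((⟪u, σ⟫ - 2 * ⟪u, Hv⟫) * w x) * q x - (2 * w x) * ⟪u, gradient q x⟫ := by
    rw [← integral_sub h3 h4]
    have hfe : (fun x₀ => pbias x₀ * k x x₀ * w x *
          ‖s₁x - (k x x₀)⁻¹ • gradient (fun y => k y x₀) x - Hv‖ ^ 2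
        - pbias x₀ * k x x₀ * w x *
          ‖s₂x - (k x x₀)⁻¹ • gradient (fun y => k y x₀) x - Hv‖ ^ 2)
        = fun x₀ => ((⟪u, σ⟫ - 2 * ⟪u, Hv⟫) * w x) * (pbias x₀ * k x x₀)
          - (2 * w x) * ⟪u, pbias x₀ • gradient (fun y => k y x₀) x⟫ := by
      funext a
      have hk0 : k x a ≠ 0 := (hk_pos a x).ne'
      have e1 : ‖s₁x - (k x a)⁻¹ • gradient (fun y => k y a) x - Hv‖ ^ 2
          - ‖s₂x - (k x a)⁻¹ • gradient (fun y => k y a) x - Hv‖ ^ 2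
          = ⟪u, σ⟫ - 2 * ⟪u, Hv⟫
            - 2 * ((k x a)⁻¹ * ⟪u, gradient (fun y => k y a) x⟫) := by
        rw [iwdsm_norm_sq_sub, sub_sub_sub_cancel_right, sub_sub_sub_cancel_right, hu, hσ]
        simp only [inner_add_right, inner_sub_right, real_inner_smul_right]
        ring
      have e2 : ⟪u, pbias a • gradient (fun y => k y a) x⟫
          = pbias a * ⟪u, gradient (fun y => k y a) x⟫ := real_inner_smul_right _ _ _
      calc pbias a * k x a * w x *
            ‖s₁x - (k x a)⁻¹ • gradient (fun y => k y a) x - Hv‖ ^ 2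
            - pbias a * k x a * w x *
            ‖s₂x - (k x a)⁻¹ • gradient (fun y => k y a) x - Hv‖ ^ 2
          = pbias a * k x a * w x *
            ((‖s₁x - (k x a)⁻¹ • gradient (fun y => k y a) x - Hv‖ ^ 2)
            - ‖s₂x - (k x a)⁻¹ • gradient (fun y => k y a) x - Hv‖ ^ 2) := by ring
        _ = pbias a * k x a * w x * (⟪u, σ⟫ - 2 * ⟪u, Hv⟫
            - 2 * ((k x a)⁻¹ * ⟪u, gradient (fun y => k y a) x⟫)) := by rw [e1]
        _ = ((⟪u, σ⟫ - 2 * ⟪u, Hv⟫) * w x) * (pbias a * k x a)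
            - (2 * w x) * (pbias a * ⟪u, gradient (fun y => k y a) x⟫) := by
            field_simp
        _ = ((⟪u, σ⟫ - 2 * ⟪u, Hv⟫) * w x) * (pbias a * k x a)
            - (2 * w x) * ⟪u, pbias a • gradient (fun y => k y a) x⟫ := by rw [e2]
    rw [hfe, integral_sub (hIbk.const_mul _) ((hIbG.const_inner u).const_mul (2 * w x)),
      integral_const_mul, integral_const_mul, integral_inner hIbG, ← hq_def, ← hq_grad]
  rw [key1, key2]
  -- final algebra
  have hHinner : ⟪u, Hv⟫ = (r x)⁻¹ * ⟪u, gradient r x⟫ - (q x)⁻¹ * ⟪u, gradient q x⟫ := by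
    rw [hHw, inner_sub_right, real_inner_smul_right, real_inner_smul_right]
  rw [hHinner, hw_def x]
  have hq0 : q x ≠ 0 := (hq_pos x).ne'
  have hr0 : r x ≠ 0 := (hr_pos x).ne'
  field_simp
  ring

/-- The key identity for a fixed time `t`. -/
lemma iwdsm_core_t {d : ℕ}
    (pbias pdata w₀ : EuclideanSpace ℝ (Fin d) → ℝ)
    (hpbias_meas : Measurable pbias) (hpdata_meas : Measurable pdata)
    (hpbias_pos : ∀ a, 0 < pbias a) (hpdata_pos : ∀ a, 0 < pdata a)
    (hw₀_def : ∀ a, w₀ a = pdata a / pbias a)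
    (k : EuclideanSpace ℝ (Fin d) → EuclideanSpace ℝ (Fin d) → ℝ)
    (hk_meas : Measurable (Function.uncurry k))
    (hk_pos : ∀ x₀ x, 0 < k x x₀)
    (hk_smooth : ∀ x₀, ContDiff ℝ 1 fun x => k x x₀)
    (q r w : EuclideanSpace ℝ (Fin d) → ℝ)
    (hq_def : ∀ x, q x = ∫ x₀, pbias x₀ * k x x₀)
    (hq_pos : ∀ x, 0 < q x)
    (hq_diff : Differentiable ℝ q)
    (hq_grad : ∀ x, gradient q x = ∫ x₀, pbias x₀ • gradient (fun y => k y x₀) x)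
    (hr_def : ∀ x, r x = ∫ x₀, pdata x₀ * k x x₀)
    (hr_pos : ∀ x, 0 < r x)
    (hr_diff : Differentiable ℝ r)
    (hr_grad : ∀ x, gradient r x = ∫ x₀, pdata x₀ • gradient (fun y => k y x₀) x)
    (hw_def : ∀ x, w x = r x / q x)
    (s₁ s₂ : EuclideanSpace ℝ (Fin d) → EuclideanSpace ℝ (Fin d))
    (h1 : Integrable fun p : EuclideanSpace ℝ (Fin d) × EuclideanSpace ℝ (Fin d) =>
      pbias p.2 * w₀ p.2 * k p.1 p.2 *
        ‖s₁ p.1 - gradient (fun y => Real.log (k y p.2)) p.1‖ ^ 2)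
    (h2 : Integrable fun p : EuclideanSpace ℝ (Fin d) × EuclideanSpace ℝ (Fin d) =>
      pbias p.2 * w₀ p.2 * k p.1 p.2 *
        ‖s₂ p.1 - gradient (fun y => Real.log (k y p.2)) p.1‖ ^ 2)
    (h3 : Integrable fun p : EuclideanSpace ℝ (Fin d) × EuclideanSpace ℝ (Fin d) =>
      pbias p.2 * k p.1 p.2 * w p.1 *
        ‖s₁ p.1 - gradient (fun y => Real.log (k y p.2)) p.1
          - gradient (fun y => Real.log (w y)) p.1‖ ^ 2)
    (h4 : Integrable fun p : EuclideanSpace ℝ (Fin d) × EuclideanSpace ℝ (Fin d) =>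
      pbias p.2 * k p.1 p.2 * w p.1 *
        ‖s₂ p.1 - gradient (fun y => Real.log (k y p.2)) p.1
          - gradient (fun y => Real.log (w y)) p.1‖ ^ 2) :
    (∫ x₀, ∫ x, pbias x₀ * w₀ x₀ * k x x₀ *
        ‖s₁ x - gradient (fun y => Real.log (k y x₀)) x‖ ^ 2)
      - (∫ x₀, ∫ x, pbias x₀ * w₀ x₀ * k x x₀ *
        ‖s₂ x - gradient (fun y => Real.log (k y x₀)) x‖ ^ 2)
    = (∫ x₀, ∫ x, pbias x₀ * k x x₀ * w x *
        ‖s₁ x - gradient (fun y => Real.log (k y x₀)) x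
          - gradient (fun y => Real.log (w y)) x‖ ^ 2)
      - (∫ x₀, ∫ x, pbias x₀ * k x x₀ * w x *
        ‖s₂ x - gradient (fun y => Real.log (k y x₀)) x
          - gradient (fun y => Real.log (w y)) x‖ ^ 2) := by
  have hw₀m : ∀ a, pbias a * w₀ a = pdata a := fun a => by
    rw [hw₀_def a, mul_div_assoc', mul_comm, mul_div_assoc, div_self (hpbias_pos a).ne', mul_one]
  rw [MeasureTheory.Measure.volume_eq_prod] at h1 h2 h3 h4
  have e1 : (∫ x₀, ∫ x, pbias x₀ * w₀ x₀ * k x x₀ *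
      ‖s₁ x - gradient (fun y => Real.log (k y x₀)) x‖ ^ 2)
      = ∫ x, ∫ x₀, pbias x₀ * w₀ x₀ * k x x₀ *
        ‖s₁ x - gradient (fun y => Real.log (k y x₀)) x‖ ^ 2 :=
    integral_integral_swap h1.swap
  have e2 : (∫ x₀, ∫ x, pbias x₀ * w₀ x₀ * k x x₀ *
      ‖s₂ x - gradient (fun y => Real.log (k y x₀)) x‖ ^ 2)
      = ∫ x, ∫ x₀, pbias x₀ * w₀ x₀ * k x x₀ *
        ‖s₂ x - gradient (fun y => Real.log (k y x₀)) x‖ ^ 2 :=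
    integral_integral_swap h2.swap
  have e3 : (∫ x₀, ∫ x, pbias x₀ * k x x₀ * w x *
      ‖s₁ x - gradient (fun y => Real.log (k y x₀)) x
        - gradient (fun y => Real.log (w y)) x‖ ^ 2)
      = ∫ x, ∫ x₀, pbias x₀ * k x x₀ * w x *
        ‖s₁ x - gradient (fun y => Real.log (k y x₀)) x
          - gradient (fun y => Real.log (w y)) x‖ ^ 2 :=
    integral_integral_swap h3.swap
  have e4 : (∫ x₀, ∫ x, pbias x₀ * k x x₀ * w x *
      ‖s₂ x - gradient (fun y => Real.log (k y x₀)) x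
        - gradient (fun y => Real.log (w y)) x‖ ^ 2)
      = ∫ x, ∫ x₀, pbias x₀ * k x x₀ * w x *
        ‖s₂ x - gradient (fun y => Real.log (k y x₀)) x
          - gradient (fun y => Real.log (w y)) x‖ ^ 2 :=
    integral_integral_swap h4.swap
  rw [e1, e2, e3, e4, ← integral_sub h1.integral_prod_left h2.integral_prod_left,
    ← integral_sub h3.integral_prod_left h4.integral_prod_left]
  refine integral_congr_ae ?_
  filter_upwards [h1.prod_right_ae, h2.prod_right_ae, h3.prod_right_ae, h4.prod_right_ae]
    with x hx1 hx2 hx3 hx4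
  exact iwdsm_core_x pbias pdata w₀ hpbias_meas hpdata_meas hpbias_pos hpdata_pos hw₀m
    k hk_meas hk_pos hk_smooth q r w hq_pos hr_pos hw_def x (hq_def x) (hr_def x)
    (hq_diff x) (hr_diff x) (hq_grad x) (hr_grad x)
    (s₁ x) (s₂ x) hx1 hx2 hx3 hx4


/-- **Equivalence of time-independent and time-dependent importance reweighting
objectives** (Appendix A.4 of "Training Unbiased Diffusion Models From Biased
Dataset").  With `w₀ := p_data / p_bias` and `w_t := r_t / q_t`, for every pair of
admissible time-dependent vector fields `s₁, s₂`:
`L_IW-DSM(s₁) − L_IW-DSM(s₂) = L_TIW-DSM(s₁) − L_TIW-DSM(s₂)`;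
the two objectives differ by a constant that does not depend on the field. -/
theorem iw_dsm_eq_tiw_dsm_up_to_const
    {d : ℕ} (hd : 1 ≤ d)
    (T : ℝ) (hT : 0 < T)
    (lam : ℝ → ℝ) (hlam_meas : Measurable lam)
    (hlam_nonneg : ∀ t ∈ Set.Ioc 0 T, 0 ≤ lam t)
    (pbias pdata : EuclideanSpace ℝ (Fin d) → ℝ)
    (hpbias_meas : Measurable pbias) (hpbias_pos : ∀ x₀, 0 < pbias x₀)
    (hpbias_prob : ∫ x₀, pbias x₀ = 1)
    (hpdata_meas : Measurable pdata) (hpdata_pos : ∀ x₀, 0 < pdata x₀)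
    (hpdata_prob : ∫ x₀, pdata x₀ = 1)
    (k : ℝ → EuclideanSpace ℝ (Fin d) → EuclideanSpace ℝ (Fin d) → ℝ)
    (hk_meas : ∀ t ∈ Set.Ioc 0 T, Measurable (Function.uncurry (k t)))
    (hk_pos : ∀ t ∈ Set.Ioc 0 T, ∀ x₀ x, 0 < k t x x₀)
    (hk_prob : ∀ t ∈ Set.Ioc 0 T, ∀ x₀, ∫ x, k t x x₀ = 1)
    (hk_smooth : ∀ t ∈ Set.Ioc 0 T, ∀ x₀, ContDiff ℝ 1 fun x => k t x x₀)
    (q r : ℝ → EuclideanSpace ℝ (Fin d) → ℝ)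
    (hq_def : ∀ t ∈ Set.Ioc 0 T, ∀ x, q t x = ∫ x₀, pbias x₀ * k t x x₀)
    (hq_pos : ∀ t ∈ Set.Ioc 0 T, ∀ x, 0 < q t x)
    (hq_diff : ∀ t ∈ Set.Ioc 0 T, Differentiable ℝ (q t))
    (hq_grad : ∀ t ∈ Set.Ioc 0 T, ∀ x,
      gradient (q t) x = ∫ x₀, pbias x₀ • gradient (fun y => k t y x₀) x)
    (hr_def : ∀ t ∈ Set.Ioc 0 T, ∀ x, r t x = ∫ x₀, pdata x₀ * k t x x₀)
    (hr_pos : ∀ t ∈ Set.Ioc 0 T, ∀ x, 0 < r t x)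
    (hr_diff : ∀ t ∈ Set.Ioc 0 T, Differentiable ℝ (r t))
    (hr_grad : ∀ t ∈ Set.Ioc 0 T, ∀ x,
      gradient (r t) x = ∫ x₀, pdata x₀ • gradient (fun y => k t y x₀) x)
    -- the time-independent ratio w₀ = p_data / p_bias
    (w₀ : EuclideanSpace ℝ (Fin d) → ℝ)
    (hw₀_def : ∀ x₀, w₀ x₀ = pdata x₀ / pbias x₀)
    -- the time-dependent ratio w_t = r_t / q_t
    (w : ℝ → EuclideanSpace ℝ (Fin d) → ℝ)
    (hw_def : ∀ t ∈ Set.Ioc 0 T, ∀ x, w t x = r t x / q t x)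
    -- the two time-dependent vector fields
    (s₁ s₂ : ℝ → EuclideanSpace ℝ (Fin d) → EuclideanSpace ℝ (Fin d))
    (hs₁_meas : Measurable fun p : ℝ × EuclideanSpace ℝ (Fin d) => s₁ p.1 p.2)
    (hs₂_meas : Measurable fun p : ℝ × EuclideanSpace ℝ (Fin d) => s₂ p.1 p.2)
    -- all integrals below are assumed finite
    (hint_iw₁ : ∀ t ∈ Set.Ioc 0 T,
      Integrable fun p : EuclideanSpace ℝ (Fin d) × EuclideanSpace ℝ (Fin d) =>
        pbias p.2 * w₀ p.2 * k t p.1 p.2 *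
          ‖s₁ t p.1 - gradient (fun y => Real.log (k t y p.2)) p.1‖ ^ 2)
    (hint_iw₂ : ∀ t ∈ Set.Ioc 0 T,
      Integrable fun p : EuclideanSpace ℝ (Fin d) × EuclideanSpace ℝ (Fin d) =>
        pbias p.2 * w₀ p.2 * k t p.1 p.2 *
          ‖s₂ t p.1 - gradient (fun y => Real.log (k t y p.2)) p.1‖ ^ 2)
    (hint_tiw₁ : ∀ t ∈ Set.Ioc 0 T,
      Integrable fun p : EuclideanSpace ℝ (Fin d) × EuclideanSpace ℝ (Fin d) =>
        pbias p.2 * k t p.1 p.2 * w t p.1 *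
          ‖s₁ t p.1 - gradient (fun y => Real.log (k t y p.2)) p.1
            - gradient (fun y => Real.log (w t y)) p.1‖ ^ 2)
    (hint_tiw₂ : ∀ t ∈ Set.Ioc 0 T,
      Integrable fun p : EuclideanSpace ℝ (Fin d) × EuclideanSpace ℝ (Fin d) =>
        pbias p.2 * k t p.1 p.2 * w t p.1 *
          ‖s₂ t p.1 - gradient (fun y => Real.log (k t y p.2)) p.1
            - gradient (fun y => Real.log (w t y)) p.1‖ ^ 2)
    (hint_t_iw₁ : IntegrableOn (fun t => lam t *
      ∫ x₀, ∫ x, pbias x₀ * w₀ x₀ * k t x x₀ *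
        ‖s₁ t x - gradient (fun y => Real.log (k t y x₀)) x‖ ^ 2) (Set.Ioc 0 T))
    (hint_t_iw₂ : IntegrableOn (fun t => lam t *
      ∫ x₀, ∫ x, pbias x₀ * w₀ x₀ * k t x x₀ *
        ‖s₂ t x - gradient (fun y => Real.log (k t y x₀)) x‖ ^ 2) (Set.Ioc 0 T))
    (hint_t_tiw₁ : IntegrableOn (fun t => lam t *
      ∫ x₀, ∫ x, pbias x₀ * k t x x₀ * w t x *
        ‖s₁ t x - gradient (fun y => Real.log (k t y x₀)) x
          - gradient (fun y => Real.log (w t y)) x‖ ^ 2) (Set.Ioc 0 T))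
    (hint_t_tiw₂ : IntegrableOn (fun t => lam t *
      ∫ x₀, ∫ x, pbias x₀ * k t x x₀ * w t x *
        ‖s₂ t x - gradient (fun y => Real.log (k t y x₀)) x
          - gradient (fun y => Real.log (w t y)) x‖ ^ 2) (Set.Ioc 0 T)) :
    (1 / 2) * (∫ t in Set.Ioc 0 T, lam t *
        ∫ x₀, ∫ x, pbias x₀ * w₀ x₀ * k t x x₀ *
          ‖s₁ t x - gradient (fun y => Real.log (k t y x₀)) x‖ ^ 2)
      - (1 / 2) * (∫ t in Set.Ioc 0 T, lam t *
        ∫ x₀, ∫ x, pbias x₀ * w₀ x₀ * k t x x₀ *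
          ‖s₂ t x - gradient (fun y => Real.log (k t y x₀)) x‖ ^ 2)
    = (1 / 2) * (∫ t in Set.Ioc 0 T, lam t *
        ∫ x₀, ∫ x, pbias x₀ * k t x x₀ * w t x *
          ‖s₁ t x - gradient (fun y => Real.log (k t y x₀)) x
            - gradient (fun y => Real.log (w t y)) x‖ ^ 2)
      - (1 / 2) * (∫ t in Set.Ioc 0 T, lam t *
        ∫ x₀, ∫ x, pbias x₀ * k t x x₀ * w t x *
          ‖s₂ t x - gradient (fun y => Real.log (k t y x₀)) x
            - gradient (fun y => Real.log (w t y)) x‖ ^ 2) := by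
  rw [← mul_sub, ← mul_sub, ← integral_sub hint_t_iw₁ hint_t_iw₂,
    ← integral_sub hint_t_tiw₁ hint_t_tiw₂]
  congr 1
  refine setIntegral_congr_fun measurableSet_Ioc fun t ht => ?_
  rw [← mul_sub, ← mul_sub]
  congr 1
  exact iwdsm_core_t pbias pdata w₀ hpbias_meas hpdata_meas hpbias_pos hpdata_pos hw₀_def
    (k t) (hk_meas t ht) (hk_pos t ht) (hk_smooth t ht) (q t) (r t) (w t)
    (hq_def t ht) (hq_pos t ht) (hq_diff t ht) (hq_grad t ht)
    (hr_def t ht) (hr_pos t ht) (hr_diff t ht) (hr_grad t ht) (hw_def t ht)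
    (s₁ t) (s₂ t) (hint_iw₁ t ht) (hint_iw₂ t ht) (hint_tiw₁ t ht) (hint_tiw₂ t ht)
end
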